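/- arXiv:2410.09751 — 13 statements merged into one kernel-verified Lean document; each statement's English description precedes it below -/
import Mathlib

section
/- Let A be a unital commutative real algebra and L : A → ℝ a linear positive semidefinite functional with L(1) = 1 such that C_a := sup over n ≥ 1 of (L(a^{2n}))^{1/(2n)} is finite for every a ∈ A. Then the map a ↦ C_a is submultiplicative: C_{ab} ≤ C_a · C_b for all a, b ∈ A, and C_1 = 1; i.e., C is an absolute value on A. -/
/-- The set of values `(L(a^{2n}))^{1/(2n)}`, `n ≥ 1`. -/
def Cset {A : Type*} [CommRing A] [Algebra ℝ A] (L : A →ₗ[ℝ] ℝ) (a : A) : Set ℝ :=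
  {x : ℝ | ∃ n : ℕ, 1 ≤ n ∧ x = (L (a ^ (2 * n))) ^ (((2 * n : ℕ) : ℝ))⁻¹}

theorem stmt_1 {A : Type*} [CommRing A] [Algebra ℝ A]
    (L : A →ₗ[ℝ] ℝ) (hpsd : ∀ x : A, 0 ≤ L (x ^ 2)) (hone : L 1 = 1)
    (hfin : ∀ a : A, BddAbove (Cset L a)) :
    (∀ a b : A, sSup (Cset L (a * b)) ≤ sSup (Cset L a) * sSup (Cset L b)) ∧
      sSup (Cset L 1) = 1 := by
  -- Cauchy-Schwarz
  have key : ∀ x y : A, (L (x * y)) ^ 2 ≤ L (x ^ 2) * L (y ^ 2) := by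
    intro x y
    have h : ∀ t : ℝ, 0 ≤ L (y ^ 2) * (t * t) + (2 * L (x * y)) * t + L (x ^ 2) := by
      intro t
      have h2 : (x + t • y) ^ 2 = x ^ 2 + t • (x * y + x * y) + (t * t) • (y ^ 2) := by
        simp only [Algebra.smul_def, map_mul]; ring
      have h3 : L ((x + t • y) ^ 2) =
          L (y ^ 2) * (t * t) + (2 * L (x * y)) * t + L (x ^ 2) := by
        simp only [h2, map_add, map_smul, smul_eq_mul]; ring
      rw [← h3]; exact hpsd _
    have hd := discrim_le_zero h
    rw [discrim] at hd
    nlinarith [hd]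
  have hnn : ∀ (a : A) (n : ℕ), 0 ≤ L (a ^ (2 * n)) := by
    intro a n
    have h : a ^ (2 * n) = (a ^ n) ^ 2 := by rw [mul_comm, pow_mul]
    rw [h]; exact hpsd _
  have hmem : ∀ (a : A) (n : ℕ), 1 ≤ n →
      (L (a ^ (2 * n))) ^ (((2 * n : ℕ) : ℝ))⁻¹ ∈ Cset L a :=
    fun a n hn => ⟨n, hn, rfl⟩
  have hne : ∀ a : A, (Cset L a).Nonempty := fun a => ⟨_, hmem a 1 le_rfl⟩
  have hC0 : ∀ a : A, 0 ≤ sSup (Cset L a) := by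
    intro a
    refine le_trans ?_ (le_csSup (hfin a) (hmem a 1 le_rfl))
    exact Real.rpow_nonneg (hnn a 1) _
  have hbound : ∀ (a : A) (n : ℕ), 1 ≤ n → L (a ^ (2 * n)) ≤ sSup (Cset L a) ^ (2 * n) := by
    intro a n hn
    have h1 : (L (a ^ (2 * n))) ^ (((2 * n : ℕ) : ℝ))⁻¹ ≤ sSup (Cset L a) :=
      le_csSup (hfin a) (hmem a n hn)
    have h2 := pow_le_pow_left₀ (Real.rpow_nonneg (hnn a n) _) h1 (2 * n)
    rwa [Real.rpow_inv_natCast_pow (hnn a n) (by omega)] at h2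
  constructor
  · intro a b
    set Ca := sSup (Cset L a)
    set Cb := sSup (Cset L b)
    refine csSup_le (hne _) ?_
    rintro x ⟨n, hn, rfl⟩
    have hsplit : (a * b) ^ (2 * n) = a ^ (2 * n) * b ^ (2 * n) := mul_pow a b (2 * n)
    have hsq : ∀ c : A, (c ^ (2 * n)) ^ 2 = c ^ (2 * (2 * n)) := by
      intro c; rw [← pow_mul]; ring
    have h1 : (L ((a * b) ^ (2 * n))) ^ 2 ≤ L (a ^ (2 * (2 * n))) * L (b ^ (2 * (2 * n))) := by
      rw [hsplit, ← hsq a, ← hsq b]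
      exact key _ _
    have ha := hbound a (2 * n) (by omega)
    have hb := hbound b (2 * n) (by omega)
    have h2 : (L ((a * b) ^ (2 * n))) ^ 2 ≤ ((Ca * Cb) ^ (2 * n)) ^ 2 := by
      calc (L ((a * b) ^ (2 * n))) ^ 2 ≤ L (a ^ (2 * (2 * n))) * L (b ^ (2 * (2 * n))) := h1
        _ ≤ Ca ^ (2 * (2 * n)) * Cb ^ (2 * (2 * n)) :=
            mul_le_mul ha hb (hnn b _) (pow_nonneg (hC0 a) _)
        _ = ((Ca * Cb) ^ (2 * n)) ^ 2 := by ring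
    have hM : 0 ≤ (Ca * Cb) ^ (2 * n) := pow_nonneg (mul_nonneg (hC0 a) (hC0 b)) _
    have h3 : L ((a * b) ^ (2 * n)) ≤ (Ca * Cb) ^ (2 * n) := by
      nlinarith [hnn (a * b) n, h2, hM]
    have h4 := Real.rpow_le_rpow (hnn (a * b) n) h3 (by positivity : (0:ℝ) ≤ (((2 * n : ℕ) : ℝ))⁻¹)
    rwa [Real.pow_rpow_inv_natCast (mul_nonneg (hC0 a) (hC0 b)) (by omega)] at h4
  · have hset : Cset L 1 = {1} := by
      ext x
      constructor
      · rintro ⟨n, hn, rfl⟩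
        simp [one_pow, hone]
      · rintro rfl
        exact ⟨1, le_rfl, by simp [hone]⟩
    rw [hset, csSup_singleton]
end

section
/- Let A be a unital commutative real algebra and L : A → ℝ a linear positive semidefinite functional with L(1) = 1 and C_a := sup_{n≥1}(L(a^{2n}))^{1/(2n)} finite for all a. Then C_{a²} = (C_a)² for all a ∈ A. -/
theorem stmt_2 {A : Type*} [CommRing A] [Algebra ℝ A]
    (L : A →ₗ[ℝ] ℝ) (hpsd : ∀ x : A, 0 ≤ L (x ^ 2)) (hone : L 1 = 1)
    (hfin : ∀ a : A, BddAbove (Cset L a)) :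
    ∀ a : A, sSup (Cset L (a ^ 2)) = (sSup (Cset L a)) ^ 2 := by
  -- variance inequality L(x)^2 ≤ L(x^2)
  have hvar : ∀ x : A, (L x) ^ 2 ≤ L (x ^ 2) := by
    intro x
    have hexp : (x - (L x) • (1 : A)) ^ 2
        = x ^ 2 - (2 * L x) • x + ((L x) ^ 2) • (1 : A) := by
      simp only [Algebra.smul_def, map_mul, map_pow, map_ofNat]
      ring
    have h := hpsd (x - (L x) • (1 : A))
    rw [hexp] at h
    simp only [map_add, map_sub, map_smul, smul_eq_mul, hone, mul_one] at h
    nlinarith [h]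
  intro a
  have hLpos : ∀ m : ℕ, 0 ≤ L (a ^ (2 * m)) := by
    intro m
    rw [mul_comm, pow_mul]
    exact hpsd _
  have hxnonneg : ∀ m : ℕ, 0 ≤ (L (a ^ (2 * m))) ^ (((2 * m : ℕ) : ℝ))⁻¹ :=
    fun m => Real.rpow_nonneg (hLpos m) _
  -- the square identity: elements of Cset L (a^2) are squares of even-index elements of Cset L a
  have hsq : ∀ n : ℕ, 1 ≤ n →
      (L ((a ^ 2) ^ (2 * n))) ^ (((2 * n : ℕ) : ℝ))⁻¹
        = ((L (a ^ (2 * (2 * n)))) ^ (((2 * (2 * n) : ℕ) : ℝ))⁻¹) ^ 2 := by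
    intro n hn
    have hpow : (a ^ 2) ^ (2 * n) = a ^ (2 * (2 * n)) := by
      rw [← pow_mul, Nat.mul_comm]
    rw [hpow]
    set z := L (a ^ (2 * (2 * n))) with hz
    have hz0 : 0 ≤ z := hLpos (2 * n)
    rw [← Real.rpow_natCast (z ^ (((2 * (2 * n) : ℕ) : ℝ))⁻¹) 2,
      ← Real.rpow_mul hz0]
    congr 1
    have hn0 : (n : ℝ) ≠ 0 := Nat.cast_ne_zero.mpr (by omega)
    push_cast
    field_simp
  -- monotonicity under doubling indices
  have hmono : ∀ m : ℕ, 1 ≤ m →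
      (L (a ^ (2 * m))) ^ (((2 * m : ℕ) : ℝ))⁻¹
        ≤ (L (a ^ (2 * (2 * m)))) ^ (((2 * (2 * m) : ℕ) : ℝ))⁻¹ := by
    intro m hm
    have hkey : (L (a ^ (2 * m))) ^ 2 ≤ L (a ^ (2 * (2 * m))) := by
      have := hvar (a ^ (2 * m))
      have hpow : (a ^ (2 * m)) ^ 2 = a ^ (2 * (2 * m)) := by
        rw [← pow_mul, Nat.mul_comm]
      rwa [hpow] at this
    have h1 : ((L (a ^ (2 * m)) ^ 2 : ℝ)) ^ (((2 * (2 * m) : ℕ) : ℝ))⁻¹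
        ≤ (L (a ^ (2 * (2 * m)))) ^ (((2 * (2 * m) : ℕ) : ℝ))⁻¹ :=
      Real.rpow_le_rpow (sq_nonneg _) hkey (by positivity)
    have h2 : ((L (a ^ (2 * m)) ^ 2 : ℝ)) ^ (((2 * (2 * m) : ℕ) : ℝ))⁻¹
        = (L (a ^ (2 * m))) ^ (((2 * m : ℕ) : ℝ))⁻¹ := by
      rw [← Real.rpow_natCast (L (a ^ (2 * m))) 2, ← Real.rpow_mul (hLpos m)]
      congr 1
      have hm0 : (m : ℝ) ≠ 0 := Nat.cast_ne_zero.mpr (by omega)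
      push_cast
      field_simp
    linarith [h1, h2.symm.le, h2.le]
  have hS : (Cset L a).Nonempty := ⟨_, 1, le_rfl, rfl⟩
  have hT : (Cset L (a ^ 2)).Nonempty := ⟨_, 1, le_rfl, rfl⟩
  have hbS := hfin a
  have hbT := hfin (a ^ 2)
  have hSnonneg : 0 ≤ sSup (Cset L a) :=
    le_trans (hxnonneg 1) (le_csSup hbS ⟨1, le_rfl, rfl⟩)
  have hTnonneg : 0 ≤ sSup (Cset L (a ^ 2)) := by
    refine le_trans ?_ (le_csSup hbT ⟨1, le_rfl, rfl⟩)
    exact Real.rpow_nonneg (by rw [mul_comm, pow_mul]; exact hpsd _) _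
  apply le_antisymm
  · apply csSup_le hT
    rintro y ⟨n, hn, rfl⟩
    rw [hsq n hn]
    have hmem : (L (a ^ (2 * (2 * n)))) ^ (((2 * (2 * n) : ℕ) : ℝ))⁻¹ ∈ Cset L a :=
      ⟨2 * n, by omega, rfl⟩
    exact pow_le_pow_left₀ (hxnonneg (2 * n)) (le_csSup hbS hmem) 2
  · have h1 : sSup (Cset L a) ≤ Real.sqrt (sSup (Cset L (a ^ 2))) := by
      apply csSup_le hS
      rintro y ⟨m, hm, rfl⟩
      have hmemT : ((L (a ^ (2 * (2 * m)))) ^ (((2 * (2 * m) : ℕ) : ℝ))⁻¹) ^ 2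
          ∈ Cset L (a ^ 2) := ⟨m, hm, (hsq m hm).symm⟩
      calc (L (a ^ (2 * m))) ^ (((2 * m : ℕ) : ℝ))⁻¹
          ≤ (L (a ^ (2 * (2 * m)))) ^ (((2 * (2 * m) : ℕ) : ℝ))⁻¹ := hmono m hm
        _ = Real.sqrt (((L (a ^ (2 * (2 * m)))) ^ (((2 * (2 * m) : ℕ) : ℝ))⁻¹) ^ 2) :=
            (Real.sqrt_sq (hxnonneg (2 * m))).symm
        _ ≤ Real.sqrt (sSup (Cset L (a ^ 2))) :=
            Real.sqrt_le_sqrt (le_csSup hbT hmemT)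
    calc (sSup (Cset L a)) ^ 2
        ≤ (Real.sqrt (sSup (Cset L (a ^ 2)))) ^ 2 :=
          pow_le_pow_left₀ hSnonneg h1 2
      _ = sSup (Cset L (a ^ 2)) := Real.sq_sqrt hTnonneg
end

section
/- Let A be a unital commutative real algebra, L : A → ℝ linear positive semidefinite, and suppose for a ∈ A the functionals x ↦ L((M−a)x) and x ↦ L((M+a)x) are positive semidefinite (i.e., L((M−a)x²) ≥ 0 and L((M+a)x²) ≥ 0 for all x), where M ∈ ℝ. Then x ↦ L((M²−a²)x) is positive semidefinite, i.e., L((M²−a²)x²) ≥ 0 for all x ∈ A. -/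
theorem stmt_5 {A : Type*} [CommRing A] [Algebra ℝ A]
    (L : A →ₗ[ℝ] ℝ) (hpsd : ∀ x : A, 0 ≤ L (x ^ 2))
    (M : ℝ) (a : A)
    (h₁ : ∀ x : A, 0 ≤ L ((algebraMap ℝ A M - a) * x ^ 2))
    (h₂ : ∀ x : A, 0 ≤ L ((algebraMap ℝ A M + a) * x ^ 2)) :
    ∀ x : A, 0 ≤ L ((algebraMap ℝ A (M ^ 2) - a ^ 2) * x ^ 2) := by
  intro x
  set m := algebraMap ℝ A M with hm
  rcases lt_trichotomy M 0 with hM | hM | hM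
  · -- M < 0 : L vanishes on all squares
    have hz : ∀ y : A, L (y ^ 2) = 0 := by
      intro y
      have h := add_nonneg (h₁ y) (h₂ y)
      have e : (m - a) * y ^ 2 + (m + a) * y ^ 2 = (2 * M) • (y ^ 2) := by
        rw [Algebra.smul_def, map_mul, map_ofNat, hm]; ring
      rw [← map_add, e, map_smul, smul_eq_mul] at h
      nlinarith [hpsd y]
    have e : (algebraMap ℝ A (M ^ 2) - a ^ 2) * x ^ 2
        = (M ^ 2) • x ^ 2 - (a * x) ^ 2 := by
      rw [Algebra.smul_def, map_pow]; ring
    rw [e, map_sub, map_smul, smul_eq_mul, hz x, hz (a * x)]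
    simp
  · -- M = 0
    subst hM
    have hm0 : m = 0 := by simp [hm]
    have ha : ∀ y : A, L (a * y ^ 2) = 0 := by
      intro y
      have h1 := h₁ y
      have h2 := h₂ y
      rw [hm0] at h1 h2
      have e1 : (0 - a) * y ^ 2 = -(a * y ^ 2) := by ring
      have e2 : (0 + a) * y ^ 2 = a * y ^ 2 := by ring
      rw [e1, map_neg] at h1
      rw [e2] at h2
      linarith
    have hp : ∀ u v : A, L (a * (u * v)) = 0 := by
      intro u v
      have h := ha (u + v)
      have e : a * (u + v) ^ 2
          = a * u ^ 2 + a * v ^ 2 + (a * (u * v) + a * (u * v)) := by ring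
      rw [e, map_add, map_add, map_add, ha u, ha v] at h
      linarith
    have e : (algebraMap ℝ A ((0:ℝ) ^ 2) - a ^ 2) * x ^ 2
        = -(a * ((a * x) * x)) := by
      simp; ring
    rw [e, map_neg, hp (a * x) x]
    simp
  · -- M > 0 : the key identity
    have key : (m - a) * ((m + a) * x) ^ 2 + (m + a) * ((m - a) * x) ^ 2
        = (2 * M) • ((algebraMap ℝ A (M ^ 2) - a ^ 2) * x ^ 2) := by
      rw [Algebra.smul_def, map_mul, map_ofNat, map_pow, hm]; ring
    have h := add_nonneg (h₁ ((m + a) * x)) (h₂ ((m - a) * x))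
    rw [← map_add, key, map_smul, smul_eq_mul] at h
    nlinarith
end

section
/- Let A be a unital commutative real algebra, M > 0 a real number, and L : A → ℝ a linear functional such that L((M−a)^j (M+a)^k) ≥ 0 for all a ∈ A and all j, k ∈ ℕ. Then L(a²) ≥ 0 for all a ∈ A, i.e., L is positive semidefinite. -/
theorem stmt_7 {A : Type*} [CommRing A] [Algebra ℝ A]
    (L : A →ₗ[ℝ] ℝ) (M : ℝ) (hM : 0 < M)
    (h : ∀ (a : A) (j k : ℕ),
      0 ≤ L ((algebraMap ℝ A M - a) ^ j * (algebraMap ℝ A M + a) ^ k)) :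
    ∀ a : A, 0 ≤ L (a ^ 2) := by
  intro a
  by_contra hneg
  push_neg at hneg
  set m := algebraMap ℝ A M with hm
  set c := L (a ^ 2) with hc
  set b := L (m * a) with hb
  set d := L (m * m) with hd
  have key : ∀ t : ℝ, 0 ≤ d - 2 * t * b + t ^ 2 * c := by
    intro t
    have h0 := h (t • a) 2 0
    have e : (m - t • a) ^ 2 * (m + t • a) ^ 0
        = m * m - (2 * t) • (m * a) + (t ^ 2) • (a ^ 2) := by
      simp only [Algebra.smul_def, map_mul, map_pow, map_ofNat, pow_zero, mul_one]
      ring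
    rw [e, map_add, map_sub, map_smul, map_smul] at h0
    simpa [smul_eq_mul, ← hb, ← hc, ← hd, mul_assoc] using h0
  set t : ℝ := max 1 ((1 + |d| + 2 * |b|) / (-c)) with ht
  have ht1 : (1 : ℝ) ≤ t := le_max_left _ _
  have htq : (1 + |d| + 2 * |b|) / (-c) ≤ t := le_max_right _ _
  have hcneg : 0 < -c := by linarith
  have hct : c * t ≤ -(1 + |d| + 2 * |b|) := by
    have := (div_le_iff₀ hcneg).mp htq
    nlinarith
  have h1 := key t
  have hd1 : d ≤ |d| := le_abs_self d
  have hb1 : b ≤ |b| := le_abs_self b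
  have hb2 : -b ≤ |b| := neg_le_abs b
  have ht0 : (0:ℝ) ≤ t := by linarith
  have habsd : (0:ℝ) ≤ 1 + |d| := by positivity
  nlinarith [mul_le_mul_of_nonneg_left hct ht0,
    mul_le_mul_of_nonneg_left hb2 ht0,
    mul_le_mul_of_nonneg_left ht1 habsd]
end

section
/- Let A be a unital commutative real algebra and L : A → ℝ a linear positive semidefinite functional with L(1) = 1 whose range of Rayleigh quotients is bounded: D_a := sup{ L(a x²)/L(x²) : x ∈ A, L(x²) ≠ 0 } < ∞ for all a. If ν is any positive Radon measure on a compact K' ⊆ X(A) representing L, then D_a ≤ sup_{α ∈ K'} α(a) for every a ∈ A. -/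
/-! For a character α, α(a x²) = α(a) α(x)² ≤ (sup_{K'} ev_a) α(x)². Integrating against ν gives
L(a x²) ≤ (sup_{K'} ev_a) L(x²); compactness of K' makes the evaluations bounded, hence
integrable, and L(1) = 1 forces ν to be finite. -/

open MeasureTheory

/-- A character of a unital commutative real algebra, as a function `A → ℝ`. -/
def IsChar {A : Type*} [CommRing A] [Algebra ℝ A] (α : A → ℝ) : Prop :=
  α 1 = 1 ∧ (∀ x y : A, α (x + y) = α x + α y) ∧ (∀ x y : A, α (x * y) = α x * α y) ∧
    ∀ (c : ℝ) (x : A), α (c • x) = c * α x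

namespace IsChar

variable {A : Type*} [CommRing A] [Algebra ℝ A] {α : A → ℝ}

theorem map_one (hα : IsChar α) : α 1 = 1 := hα.1

theorem map_mul (hα : IsChar α) (x y : A) : α (x * y) = α x * α y := hα.2.2.1 x y

theorem map_sq (hα : IsChar α) (x : A) : α (x ^ 2) = α x ^ 2 := by
  rw [sq, hα.map_mul, sq]

end IsChar

theorem isFiniteMeasure_of_integral_one_ne_zero {Ω : Type*} [MeasurableSpace Ω] {μ : Measure Ω}
    (h : ∫ _ : Ω, (1 : ℝ) ∂μ ≠ 0) : IsFiniteMeasure μ :=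
  (integrable_const_iff_isFiniteMeasure one_ne_zero).mp (Integrable.of_integral_ne_zero h)

section PointEvaluation

variable {A : Type*} {K : Set (A → ℝ)}

theorem IsCompact.bddAbove_eval (hK : IsCompact K) (b : A) :
    BddAbove {r : ℝ | ∃ α ∈ K, r = α b} := by
  refine (hK.image (continuous_apply b)).bddAbove.mono ?_
  rintro _ ⟨α, hα, rfl⟩
  exact ⟨α, hα, rfl⟩

theorem IsCompact.integrable_eval (hK : IsCompact K) (ν : Measure K) [IsFiniteMeasure ν] (b : A) :
    Integrable (fun α : K => (α : A → ℝ) b) ν := by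
  obtain ⟨C, hC⟩ := (hK.image (continuous_apply b)).isBounded.exists_norm_le
  exact .of_bound ((measurable_pi_apply b).comp measurable_subtype_coe).aestronglyMeasurable C
    (.of_forall fun α => hC _ ⟨α, α.2, rfl⟩)

variable [CommRing A] [Algebra ℝ A]

theorem integral_eval_mul_sq_le (hK : IsCompact K) (hchar : ∀ α ∈ K, IsChar α)
    (ν : Measure K) [IsFiniteMeasure ν] {a : A} {S : ℝ} (hS : ∀ α ∈ K, α a ≤ S) (x : A) :
    ∫ α : K, (α : A → ℝ) (a * x ^ 2) ∂ν ≤ S * ∫ α : K, (α : A → ℝ) (x ^ 2) ∂ν := by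
  rw [← integral_const_mul]
  refine integral_mono (hK.integrable_eval ν _) ((hK.integrable_eval ν _).const_mul S) fun α => ?_
  rw [(hchar α α.2).map_mul, (hchar α α.2).map_sq]
  exact mul_le_mul_of_nonneg_right (hS α α.2) (sq_nonneg _)

end PointEvaluation

theorem stmt_8_general {A : Type*} [CommRing A] [Algebra ℝ A]
    (L : A →ₗ[ℝ] ℝ) (hpsd : ∀ x : A, 0 ≤ L (x ^ 2)) (hone : L 1 = 1)
    (K' : Set (A → ℝ)) (hK'char : ∀ α ∈ K', IsChar α) (hK'comp : IsCompact K')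
    (ν : Measure K') (hrep : ∀ a : A, L a = ∫ α : K', (α : A → ℝ) a ∂ν) :
    ∀ a : A,
      sSup {r : ℝ | ∃ x : A, L (x ^ 2) ≠ 0 ∧ r = L (a * x ^ 2) / L (x ^ 2)} ≤
        sSup {r : ℝ | ∃ α ∈ K', r = α a} := by
  intro a
  have hν : IsFiniteMeasure ν := by
    refine isFiniteMeasure_of_integral_one_ne_zero ?_
    rw [← integral_congr_ae (.of_forall fun α : K' => (hK'char α α.2).map_one), ← hrep, hone]
    exact one_ne_zero
  have hS : ∀ α ∈ K', α a ≤ sSup {r : ℝ | ∃ α ∈ K', r = α a} :=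
    fun α hα => le_csSup (hK'comp.bddAbove_eval a) ⟨α, hα, rfl⟩
  refine csSup_le ⟨_, 1, by simp [hone], rfl⟩ ?_
  rintro r ⟨x, hx, rfl⟩
  rw [div_le_iff₀ ((hpsd x).lt_of_ne' hx), hrep, hrep]
  exact integral_eval_mul_sq_le hK'comp hK'char ν hS x

theorem stmt_8 {A : Type*} [CommRing A] [Algebra ℝ A]
    (L : A →ₗ[ℝ] ℝ) (hpsd : ∀ x : A, 0 ≤ L (x ^ 2)) (hone : L 1 = 1)
    (hfin : ∀ a : A, BddAbove {r : ℝ | ∃ x : A, L (x ^ 2) ≠ 0 ∧ r = L (a * x ^ 2) / L (x ^ 2)})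
    (K' : Set (A → ℝ)) (hK'char : ∀ α ∈ K', IsChar α) (hK'comp : IsCompact K')
    (ν : Measure K') (hrep : ∀ a : A, L a = ∫ α : K', (α : A → ℝ) a ∂ν) :
    ∀ a : A,
      sSup {r : ℝ | ∃ x : A, L (x ^ 2) ≠ 0 ∧ r = L (a * x ^ 2) / L (x ^ 2)} ≤
        sSup {r : ℝ | ∃ α ∈ K', r = α a} :=
  stmt_8_general L hpsd hone K' hK'char hK'comp ν hrep
end

section
/- Let A be a unital commutative real algebra, L : A → ℝ linear positive semidefinite, L(1) = 1, and suppose L is represented by a positive Radon measure ν on K = {α ∈ X(A) : d_a ≤ α(a) ≤ D_a for all a}, where d_a and D_a are the infimum and supremum of the Rayleigh quotients L(ax²)/L(x²) over x with L(x²) ≠ 0. Then sup_{α∈K} α(a) = D_a and inf_{α∈K} α(a) = d_a for every a ∈ A. -/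
open MeasureTheory

/-- The set of Rayleigh quotients of `L` at `a`. -/
def Rayleigh {A : Type*} [CommRing A] [Algebra ℝ A] (L : A →ₗ[ℝ] ℝ) (a : A) : Set ℝ :=
  {r : ℝ | ∃ x : A, L (x ^ 2) ≠ 0 ∧ r = L (a * x ^ 2) / L (x ^ 2)}

lemma isChar_sub {A : Type*} [CommRing A] [Algebra ℝ A] {α : A → ℝ} (h : IsChar α)
    (u v : A) : α (u - v) = α u - α v := by
  obtain ⟨h1, hadd, hmul, hsmul⟩ := h
  have := hadd v (u - v)
  rw [add_sub_cancel] at this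
  linarith

theorem stmt_9 {A : Type*} [CommRing A] [Algebra ℝ A]
    (L : A →ₗ[ℝ] ℝ) (hpsd : ∀ x : A, 0 ≤ L (x ^ 2)) (hone : L 1 = 1)
    (hne : ∃ x : A, L (x ^ 2) ≠ 0)
    (hbdda : ∀ a : A, BddAbove (Rayleigh L a)) (hbddb : ∀ a : A, BddBelow (Rayleigh L a))
    (K : Set (A → ℝ))
    (hK : K = {α : A → ℝ | IsChar α ∧
      ∀ a : A, sInf (Rayleigh L a) ≤ α a ∧ α a ≤ sSup (Rayleigh L a)})
    (ν : Measure K) (hrep : ∀ a : A, L a = ∫ α : K, (α : A → ℝ) a ∂ν) :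
    ∀ a : A,
      sSup {r : ℝ | ∃ α ∈ K, r = α a} = sSup (Rayleigh L a) ∧
        sInf {r : ℝ | ∃ α ∈ K, r = α a} = sInf (Rayleigh L a) := by
  have hKne : K.Nonempty := by
    by_contra h
    rw [Set.not_nonempty_iff_eq_empty] at h
    have hE : IsEmpty K := by rw [h]; exact Set.isEmpty_coe_sort.mpr rfl
    have h1 := hrep 1
    rw [integral_of_isEmpty, hone] at h1
    exact one_ne_zero h1
  have hmem : ∀ (α : A → ℝ), α ∈ K → IsChar α ∧
      ∀ a : A, sInf (Rayleigh L a) ≤ α a ∧ α a ≤ sSup (Rayleigh L a) := by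
    intro α hα; rw [hK] at hα; exact hα
  intro a
  have hRne : (Rayleigh L a).Nonempty := by
    obtain ⟨x, hx⟩ := hne; exact ⟨_, x, hx, rfl⟩
  have hsetne : {r : ℝ | ∃ α ∈ K, r = α a}.Nonempty :=
    ⟨_, hKne.choose, hKne.choose_spec, rfl⟩
  have hsetbddA : BddAbove {r : ℝ | ∃ α ∈ K, r = α a} := by
    refine ⟨sSup (Rayleigh L a), ?_⟩
    rintro r ⟨α, hα, rfl⟩
    exact ((hmem α hα).2 a).2
  have hsetbddB : BddBelow {r : ℝ | ∃ α ∈ K, r = α a} := by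
    refine ⟨sInf (Rayleigh L a), ?_⟩
    rintro r ⟨α, hα, rfl⟩
    exact ((hmem α hα).2 a).1
  set S := sSup {r : ℝ | ∃ α ∈ K, r = α a} with hS
  set I := sInf {r : ℝ | ∃ α ∈ K, r = α a} with hI
  have hαS : ∀ (α : A → ℝ), α ∈ K → α a ≤ S := fun α hα =>
    le_csSup hsetbddA ⟨α, hα, rfl⟩
  have hαI : ∀ (α : A → ℝ), α ∈ K → I ≤ α a := fun α hα =>
    csInf_le hsetbddB ⟨α, hα, rfl⟩
  have hray_le : ∀ r ∈ Rayleigh L a, r ≤ S := by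
    rintro r ⟨x, hx, rfl⟩
    have hx2 : 0 < L (x ^ 2) := lt_of_le_of_ne (hpsd x) (Ne.symm hx)
    rw [div_le_iff₀ hx2]
    have h0 : 0 ≤ L (S • x ^ 2 - a * x ^ 2) := by
      rw [hrep]
      apply integral_nonneg
      intro α
      obtain ⟨hc, hbnd⟩ := hmem α.1 α.2
      obtain ⟨h1, hadd, hmul, hsmul⟩ := hc
      have hx2eq : α.1 (x ^ 2) = (α.1 x) ^ 2 := by
        rw [sq, sq, hmul]
      have : α.1 (S • x ^ 2 - a * x ^ 2) = (S - α.1 a) * (α.1 x) ^ 2 := by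
        rw [isChar_sub ⟨h1, hadd, hmul, hsmul⟩, hsmul, hmul, hx2eq]; ring
      show (0:ℝ) ≤ α.1 _
      rw [this]
      exact mul_nonneg (sub_nonneg.mpr (hαS α.1 α.2)) (sq_nonneg _)
    have heq : L (S • x ^ 2 - a * x ^ 2) = S * L (x ^ 2) - L (a * x ^ 2) := by
      rw [map_sub, LinearMap.map_smul, smul_eq_mul]
    linarith
  have hray_ge : ∀ r ∈ Rayleigh L a, I ≤ r := by
    rintro r ⟨x, hx, rfl⟩
    have hx2 : 0 < L (x ^ 2) := lt_of_le_of_ne (hpsd x) (Ne.symm hx)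
    rw [le_div_iff₀ hx2]
    have h0 : 0 ≤ L (a * x ^ 2 - I • x ^ 2) := by
      rw [hrep]
      apply integral_nonneg
      intro α
      obtain ⟨hc, hbnd⟩ := hmem α.1 α.2
      obtain ⟨h1, hadd, hmul, hsmul⟩ := hc
      have hx2eq : α.1 (x ^ 2) = (α.1 x) ^ 2 := by
        rw [sq, sq, hmul]
      have : α.1 (a * x ^ 2 - I • x ^ 2) = (α.1 a - I) * (α.1 x) ^ 2 := by
        rw [isChar_sub ⟨h1, hadd, hmul, hsmul⟩, hsmul, hmul, hx2eq]; ring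
      show (0:ℝ) ≤ α.1 _
      rw [this]
      exact mul_nonneg (sub_nonneg.mpr (hαI α.1 α.2)) (sq_nonneg _)
    have heq : L (a * x ^ 2 - I • x ^ 2) = L (a * x ^ 2) - I * L (x ^ 2) := by
      rw [map_sub, LinearMap.map_smul, smul_eq_mul]
    linarith
  constructor
  · exact le_antisymm (csSup_le hsetne fun r ⟨α, hα, hr⟩ => hr ▸ ((hmem α hα).2 a).2)
      (csSup_le hRne hray_le)
  · exact le_antisymm (le_csInf hRne hray_ge)
      (le_csInf hsetne fun r ⟨α, hα, hr⟩ => hr ▸ ((hmem α hα).2 a).1)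
end

section
/- Let A be a unital commutative real algebra and L : A → ℝ a linear positive semidefinite functional. For a ∈ A, define D_a = sup{L(ax²)/L(x²) : x ∈ A, L(x²) ≠ 0} and Q_L = {a : L(b²a) ≥ 0 ∀b}. If the set {M ∈ ℝ : M − a ∈ Q_L} is nonempty, then D_a is finite and D_a = inf{M ∈ ℝ : M − a ∈ Q_L}. Dually, if {M ∈ ℝ : a − M ∈ Q_L} is nonempty, then d_a = inf{L(ax²)/L(x²)} is finite and d_a = sup{M ∈ ℝ : a − M ∈ Q_L}. -/
lemma ker_aux {A : Type*} [CommRing A] [Algebra ℝ A]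
    (L : A →ₗ[ℝ] ℝ) (hpsd : ∀ x : A, 0 ≤ L (x ^ 2)) (a b : A)
    (hb : L (b ^ 2) = 0) : L (a * b ^ 2) = 0 := by
  by_contra hc
  set c := L (a * b ^ 2) with hcdef
  set d := L ((a * b) ^ 2) with hddef
  have key : ∀ t : ℝ, 0 ≤ d + 2 * t * c := by
    intro t
    have h0 := hpsd (a * b + algebraMap ℝ A t * b)
    have hexp : (a * b + algebraMap ℝ A t * b) ^ 2
        = (a * b) ^ 2 + t • (2 * (a * b ^ 2)) + (t ^ 2) • (b ^ 2) := by
      rw [Algebra.smul_def, Algebra.smul_def, map_pow]; ring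
    rw [hexp, map_add, map_add, map_smul, map_smul] at h0
    have h2 : L (2 * (a * b ^ 2)) = 2 * c := by
      have : (2 : A) * (a * b ^ 2) = (2 : ℝ) • (a * b ^ 2) := by
        rw [Algebra.smul_def, map_ofNat]
      rw [this, map_smul, smul_eq_mul]
    rw [h2, hb] at h0
    simpa [smul_eq_mul, mul_comm, mul_assoc, mul_left_comm] using h0
  have h3 : 2 * (-(d + 1) / (2 * c)) * c = -(d + 1) := by field_simp
  have := key (-(d + 1) / (2 * c))
  rw [h3] at this
  have hd : 0 ≤ d := hpsd (a * b)
  linarith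

theorem stmt_10 {A : Type*} [CommRing A] [Algebra ℝ A]
    (L : A →ₗ[ℝ] ℝ) (hpsd : ∀ x : A, 0 ≤ L (x ^ 2))
    (hne : ∃ x : A, L (x ^ 2) ≠ 0) (a : A) :
    (({M : ℝ | ∀ b : A, 0 ≤ L (b ^ 2 * (algebraMap ℝ A M - a))}).Nonempty →
      BddAbove (Rayleigh L a) ∧
        sSup (Rayleigh L a) =
          sInf {M : ℝ | ∀ b : A, 0 ≤ L (b ^ 2 * (algebraMap ℝ A M - a))}) ∧
    (({M : ℝ | ∀ b : A, 0 ≤ L (b ^ 2 * (a - algebraMap ℝ A M))}).Nonempty →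
      BddBelow (Rayleigh L a) ∧
        sInf (Rayleigh L a) =
          sSup {M : ℝ | ∀ b : A, 0 ≤ L (b ^ 2 * (a - algebraMap ℝ A M))}) := by
  have hcalc : ∀ (M : ℝ) (b : A),
      L (b ^ 2 * (algebraMap ℝ A M - a)) = M * L (b ^ 2) - L (a * b ^ 2) := by
    intro M b
    have h : b ^ 2 * (algebraMap ℝ A M - a) = M • b ^ 2 - a * b ^ 2 := by
      rw [Algebra.smul_def]; ring
    rw [h, map_sub, map_smul, smul_eq_mul]
  have hcalc2 : ∀ (M : ℝ) (b : A),
      L (b ^ 2 * (a - algebraMap ℝ A M)) = L (a * b ^ 2) - M * L (b ^ 2) := by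
    intro M b
    have h : b ^ 2 * (a - algebraMap ℝ A M) = a * b ^ 2 - M • b ^ 2 := by
      rw [Algebra.smul_def]; ring
    rw [h, map_sub, map_smul, smul_eq_mul]
  have hposR : ∀ x : A, L (x ^ 2) ≠ 0 → 0 < L (x ^ 2) :=
    fun x hx => (hpsd x).lt_of_ne (Ne.symm hx)
  obtain ⟨x0, hx0⟩ := hne
  have hRne : (Rayleigh L a).Nonempty := ⟨_, x0, hx0, rfl⟩
  have hup : {M : ℝ | ∀ b : A, 0 ≤ L (b ^ 2 * (algebraMap ℝ A M - a))}
      = upperBounds (Rayleigh L a) := by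
    ext M
    constructor
    · rintro hM r ⟨x, hx, rfl⟩
      have hx' := hposR x hx
      have h := hM x
      rw [hcalc] at h
      rw [div_le_iff₀ hx']
      linarith
    · intro hM b
      rw [hcalc]
      rcases eq_or_ne (L (b ^ 2)) 0 with h0 | h0
      · rw [ker_aux L hpsd a b h0, h0]; simp
      · have hx' := hposR b h0
        have h : L (a * b ^ 2) / L (b ^ 2) ≤ M := hM ⟨b, h0, rfl⟩
        rw [div_le_iff₀ hx'] at h
        linarith
  have hdn : {M : ℝ | ∀ b : A, 0 ≤ L (b ^ 2 * (a - algebraMap ℝ A M))}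
      = lowerBounds (Rayleigh L a) := by
    ext M
    constructor
    · rintro hM r ⟨x, hx, rfl⟩
      have hx' := hposR x hx
      have h := hM x
      rw [hcalc2] at h
      rw [le_div_iff₀ hx']
      linarith
    · intro hM b
      rw [hcalc2]
      rcases eq_or_ne (L (b ^ 2)) 0 with h0 | h0
      · rw [ker_aux L hpsd a b h0, h0]; simp
      · have hx' := hposR b h0
        have h : M ≤ L (a * b ^ 2) / L (b ^ 2) := hM ⟨b, h0, rfl⟩
        rw [le_div_iff₀ hx'] at h
        linarith
  constructor
  · rw [hup]
    rintro ⟨M, hM⟩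
    have hbdd : BddAbove (Rayleigh L a) := ⟨M, hM⟩
    refine ⟨hbdd, le_antisymm ?_ ?_⟩
    · exact le_csInf ⟨M, hM⟩ fun N hN => csSup_le hRne hN
    · exact csInf_le ⟨_, fun N hN => hN hRne.choose_spec⟩
        ((isLUB_csSup hRne hbdd).1)
  · rw [hdn]
    rintro ⟨M, hM⟩
    have hbdd : BddBelow (Rayleigh L a) := ⟨M, hM⟩
    refine ⟨hbdd, le_antisymm ?_ ?_⟩
    · exact le_csSup ⟨_, fun N hN => hN hRne.choose_spec⟩
        ((isGLB_csInf hRne hbdd).1)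
    · exact csSup_le ⟨M, hM⟩ fun N hN => le_csInf hRne hN
end

section
/- Let A be a unital commutative real algebra, L : A → ℝ linear positive semidefinite with L(1) = 1, and suppose C_a = sup_{n≥1}(L(a^{2n}))^{1/(2n)} is finite for all a ∈ A. Then for every a ∈ A, C_a ≥ D_a and −C_a ≤ d_a, where D_a and d_a are the supremum and infimum of L(ax²)/L(x²) over x with L(x²) ≠ 0; moreover at least one of C_a = D_a or C_a = −d_a holds. -/
/-!
Write `C = sSup (Cset L a)`. Cauchy–Schwarz for the localized states `b ↦ L (b x²) / L (x²)`,
iterated along the powers `a ^ 2 ^ k`, together with the moment bounds `L (a ^ 2n) ≤ C ^ 2n`,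
gives `|L (a x²)| ≤ C L (x²)`, i.e. all Rayleigh quotients lie in `[-C, C]`.
Conversely, if `|L (a x²)| ≤ M L (x²)` for all `x`, then `L ((M ± a) y²) ≥ 0` for all `y`, and
`2M (M² - a²) = (M + a) (M - a)² + (M - a) (M + a)²` gives `L (a² x²) ≤ M² L (x²)`; iterating
yields `L (a ^ 2n) ≤ M ^ 2n`, hence `C ≤ M`. So `C` is the least such `M`, which is
`max (sSup (Rayleigh L a)) (-sInf (Rayleigh L a))`.
-/

open Filter Set Topology

theorem le_of_frequently_pow_le_mul_pow {r C K : ℝ} (hC : 0 ≤ C)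
    (h : ∃ᶠ n in atTop, r ^ n ≤ K * C ^ n) : r ≤ C := by
  by_contra! hCr
  have hr : 0 < r := hC.trans_lt hCr
  have hlim : Tendsto (fun n : ℕ => K * (C / r) ^ n) atTop (𝓝 0) := by
    simpa using (tendsto_pow_atTop_nhds_zero_of_lt_one (div_nonneg hC hr.le)
      ((div_lt_one hr).2 hCr)).const_mul K
  obtain ⟨n, hle, hlt⟩ := (h.and_eventually (hlim.eventually (gt_mem_nhds one_pos))).exists
  rw [div_pow, ← mul_div_assoc, div_lt_one (pow_pos hr n)] at hlt
  exact hle.not_gt hlt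

section PositiveFunctional

variable {A : Type*} [CommRing A] [Algebra ℝ A] {L : A →ₗ[ℝ] ℝ}

theorem sq_apply_mul_le (hpsd : ∀ x : A, 0 ≤ L (x ^ 2)) (u v : A) :
    L (u * v) ^ 2 ≤ L (u ^ 2) * L (v ^ 2) := by
  have hquad : ∀ t : ℝ, 0 ≤ L (v ^ 2) * (t * t) + 2 * L (u * v) * t + L (u ^ 2) := by
    intro t
    have hexp : (u + t • v) ^ 2 = (t * t) • v ^ 2 + (2 * t) • (u * v) + u ^ 2 := by
      simp only [Algebra.smul_def, map_mul, map_ofNat]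
      ring
    have h := hpsd (u + t • v)
    rw [hexp, map_add, map_add, map_smul, map_smul, smul_eq_mul, smul_eq_mul] at h
    linarith
  have hdisc := discrim_le_zero hquad
  rw [discrim] at hdisc
  linarith

theorem apply_mul_sq_eq_zero (hpsd : ∀ x : A, 0 ≤ L (x ^ 2)) {z : A} (hz : L (z ^ 2) = 0)
    (b : A) : L (b * z ^ 2) = 0 := by
  have h := sq_apply_mul_le hpsd (b * z) z
  rw [show b * z * z = b * z ^ 2 by ring, hz, mul_zero] at h
  exact pow_eq_zero_iff two_ne_zero |>.1 (le_antisymm h (sq_nonneg _))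

theorem pow_two_pow_apply_le (hpsd : ∀ x : A, 0 ≤ L (x ^ 2)) (hone : L 1 = 1) (a : A) (k : ℕ) :
    L a ^ 2 ^ k ≤ L (a ^ 2 ^ k) := by
  induction k generalizing a with
  | zero => simp
  | succ k ih =>
    calc L a ^ 2 ^ (k + 1) = (L a ^ 2) ^ 2 ^ k := by rw [pow_succ', pow_mul]
      _ ≤ L (a ^ 2) ^ 2 ^ k := by
          gcongr
          simpa [hone] using sq_apply_mul_le hpsd a 1
      _ ≤ L ((a ^ 2) ^ 2 ^ k) := ih _
      _ = L (a ^ 2 ^ (k + 1)) := by rw [← pow_mul, pow_succ']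

theorem apply_mul_mul_add_mul_sq_nonneg {b c : A} (hb : ∀ y, 0 ≤ L (b * y ^ 2))
    (hc : ∀ y, 0 ≤ L (c * y ^ 2)) (x : A) : 0 ≤ L (b * c * (b + c) * x ^ 2) := by
  rw [show b * c * (b + c) * x ^ 2 = b * (c * x) ^ 2 + c * (b * x) ^ 2 by ring, map_add]
  exact add_nonneg (hb _) (hc _)

theorem apply_sq_mul_sq_le_of_abs_le {a : A} {M : ℝ} (hM : 0 < M)
    (h : ∀ y, |L (a * y ^ 2)| ≤ M * L (y ^ 2)) (x : A) :
    L (a ^ 2 * x ^ 2) ≤ M ^ 2 * L (x ^ 2) := by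
  set m := algebraMap ℝ A M
  have hm : ∀ y, L (m * y) = M * L y := fun y => by
    rw [← Algebra.smul_def, map_smul, smul_eq_mul]
  have hplus : ∀ y, 0 ≤ L ((m + a) * y ^ 2) := fun y => by
    rw [add_mul, map_add, hm]
    linarith [neg_abs_le (L (a * y ^ 2)), h y]
  have hminus : ∀ y, 0 ≤ L ((m - a) * y ^ 2) := fun y => by
    rw [sub_mul, map_sub, hm]
    linarith [le_abs_self (L (a * y ^ 2)), h y]
  have hprod := apply_mul_mul_add_mul_sq_nonneg hplus hminus x
  rw [show (m + a) * (m - a) * ((m + a) + (m - a)) * x ^ 2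
      = (2 * M ^ 3) • x ^ 2 - (2 * M) • (a ^ 2 * x ^ 2) by
    simp only [m, Algebra.smul_def, map_mul, map_pow, map_ofNat]; ring,
    map_sub, map_smul, map_smul, smul_eq_mul, smul_eq_mul] at hprod
  nlinarith

theorem apply_pow_two_mul_mul_sq_le {a : A} {N : ℝ} (hN : 0 ≤ N)
    (h : ∀ x, L (a ^ 2 * x ^ 2) ≤ N * L (x ^ 2)) (n : ℕ) (x : A) :
    L (a ^ (2 * n) * x ^ 2) ≤ N ^ n * L (x ^ 2) := by
  induction n generalizing x with
  | zero => simp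
  | succ n ih =>
    calc L (a ^ (2 * (n + 1)) * x ^ 2) = L (a ^ (2 * n) * (a * x) ^ 2) := by ring_nf
      _ ≤ N ^ n * L (a ^ 2 * x ^ 2) := by rw [← mul_pow]; exact ih (a * x)
      _ ≤ N ^ n * (N * L (x ^ 2)) := by gcongr; exact h x
      _ = N ^ (n + 1) * L (x ^ 2) := by ring

end PositiveFunctional

section Moments

variable {A : Type*} [CommRing A] [Algebra ℝ A] {L : A →ₗ[ℝ] ℝ} {a : A}

theorem sSup_cset_nonneg (hpsd : ∀ x : A, 0 ≤ L (x ^ 2)) (hbdd : BddAbove (Cset L a)) :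
    0 ≤ sSup (Cset L a) :=
  le_csSup_of_le hbdd ⟨1, le_rfl, rfl⟩ (Real.rpow_nonneg (pow_mul' a 2 1 ▸ hpsd _) _)

theorem apply_pow_two_mul_le_sSup_cset_pow (hpsd : ∀ x : A, 0 ≤ L (x ^ 2))
    (hbdd : BddAbove (Cset L a)) {n : ℕ} (hn : 1 ≤ n) :
    L (a ^ (2 * n)) ≤ sSup (Cset L a) ^ (2 * n) := by
  have hmom : 0 ≤ L (a ^ (2 * n)) := pow_mul' a 2 n ▸ hpsd _
  calc L (a ^ (2 * n)) = (L (a ^ (2 * n)) ^ (((2 * n : ℕ) : ℝ))⁻¹) ^ (2 * n) :=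
        (Real.rpow_inv_natCast_pow hmom (by omega)).symm
    _ ≤ sSup (Cset L a) ^ (2 * n) := by
        gcongr
        exact le_csSup hbdd ⟨n, hn, rfl⟩

theorem apply_pow_mul_le_sSup_cset_pow_mul_sqrt (hpsd : ∀ x : A, 0 ≤ L (x ^ 2))
    (hbdd : BddAbove (Cset L a)) {n : ℕ} (hn : 1 ≤ n) (y : A) :
    L (a ^ n * y) ≤ sSup (Cset L a) ^ n * √(L (y ^ 2)) := by
  calc L (a ^ n * y) ≤ √(L ((a ^ n) ^ 2) * L (y ^ 2)) :=
        Real.le_sqrt_of_sq_le (sq_apply_mul_le hpsd _ _)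
    _ ≤ √((sSup (Cset L a) ^ n) ^ 2 * L (y ^ 2)) := by
        rw [← pow_mul, ← pow_mul, mul_comm n]
        gcongr
        · exact hpsd y
        · exact apply_pow_two_mul_le_sSup_cset_pow hpsd hbdd hn
    _ = sSup (Cset L a) ^ n * √(L (y ^ 2)) := by
        rw [Real.sqrt_mul' _ (hpsd y), Real.sqrt_sq (pow_nonneg (sSup_cset_nonneg hpsd hbdd) n)]

theorem abs_apply_mul_sq_le_sSup_cset_mul (hpsd : ∀ x : A, 0 ≤ L (x ^ 2))
    (hbdd : BddAbove (Cset L a)) (x : A) :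
    |L (a * x ^ 2)| ≤ sSup (Cset L a) * L (x ^ 2) := by
  rcases (hpsd x).eq_or_lt with hQ | hQ
  · rw [← hQ, apply_mul_sq_eq_zero hpsd hQ.symm a, abs_zero, mul_zero]
  set φ : A →ₗ[ℝ] ℝ := (L (x ^ 2))⁻¹ • (L ∘ₗ LinearMap.mulRight ℝ (x ^ 2))
  have hφ : ∀ b, φ b = L (b * x ^ 2) / L (x ^ 2) := fun b => by
    simp [φ, div_eq_inv_mul]
  have hφpsd : ∀ y, 0 ≤ φ (y ^ 2) := fun y => by
    rw [hφ, show y ^ 2 * x ^ 2 = (y * x) ^ 2 by ring]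
    exact div_nonneg (hpsd _) hQ.le
  have hφone : φ 1 = 1 := by rw [hφ, one_mul, div_self hQ.ne']
  suffices |φ a| ≤ sSup (Cset L a) by
    rwa [hφ, abs_div, abs_of_pos hQ, div_le_iff₀ hQ] at this
  refine le_of_frequently_pow_le_mul_pow (K := √(L ((x ^ 2) ^ 2)) / L (x ^ 2))
    (sSup_cset_nonneg hpsd hbdd) (frequently_atTop.2 fun k => ⟨2 ^ (k + 1), ?_, ?_⟩)
  · exact Nat.lt_two_pow_self.le.trans (Nat.pow_le_pow_right two_pos k.le_succ)
  calc |φ a| ^ 2 ^ (k + 1) = φ a ^ 2 ^ (k + 1) :=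
        (Nat.even_pow.2 ⟨even_two, k.succ_ne_zero⟩).pow_abs _
    _ ≤ φ (a ^ 2 ^ (k + 1)) := pow_two_pow_apply_le hφpsd hφone a (k + 1)
    _ ≤ sSup (Cset L a) ^ 2 ^ (k + 1) * √(L ((x ^ 2) ^ 2)) / L (x ^ 2) := by
        rw [hφ]
        gcongr
        exact apply_pow_mul_le_sSup_cset_pow_mul_sqrt hpsd hbdd Nat.one_le_two_pow _
    _ = √(L ((x ^ 2) ^ 2)) / L (x ^ 2) * sSup (Cset L a) ^ 2 ^ (k + 1) := by ring

theorem sSup_cset_le_of_abs_apply_mul_sq_le (hpsd : ∀ x : A, 0 ≤ L (x ^ 2)) (hone : L 1 = 1)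
    {M : ℝ} (h : ∀ x, |L (a * x ^ 2)| ≤ M * L (x ^ 2)) : sSup (Cset L a) ≤ M := by
  have hM : 0 ≤ M := by simpa [hone] using (abs_nonneg _).trans (h 1)
  refine le_of_forall_gt_imp_ge_of_dense fun M' hMM' => ?_
  have hM' : 0 < M' := hM.trans_lt hMM'
  have h' : ∀ x, |L (a * x ^ 2)| ≤ M' * L (x ^ 2) := fun x =>
    (h x).trans (by gcongr; exact hpsd x)
  have hmom : ∀ n, L (a ^ (2 * n)) ≤ M' ^ (2 * n) := fun n => by
    simpa [hone, pow_mul] using apply_pow_two_mul_mul_sq_le (sq_nonneg M')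
      (apply_sq_mul_sq_le_of_abs_le hM' h') n 1
  refine csSup_le ⟨_, 1, le_rfl, rfl⟩ ?_
  rintro _ ⟨n, hn, rfl⟩
  calc L (a ^ (2 * n)) ^ (((2 * n : ℕ) : ℝ))⁻¹ ≤ (M' ^ (2 * n)) ^ (((2 * n : ℕ) : ℝ))⁻¹ := by
        gcongr
        · exact pow_mul' a 2 n ▸ hpsd _
        · exact hmom n
    _ = M' := Real.pow_rpow_inv_natCast hM'.le (by omega)

end Moments

section RayleighQuotients

variable {A : Type*} [CommRing A] [Algebra ℝ A] {L : A →ₗ[ℝ] ℝ} {a : A}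

theorem rayleigh_nonempty (hone : L 1 = 1) : (Rayleigh L a).Nonempty :=
  ⟨_, 1, by simp [hone], rfl⟩

theorem rayleigh_subset_Icc_iff (hpsd : ∀ x : A, 0 ≤ L (x ^ 2)) {M : ℝ} :
    Rayleigh L a ⊆ Icc (-M) M ↔ ∀ x, |L (a * x ^ 2)| ≤ M * L (x ^ 2) := by
  constructor
  · intro h x
    rcases (hpsd x).eq_or_lt with hQ | hQ
    · rw [← hQ, apply_mul_sq_eq_zero hpsd hQ.symm a, abs_zero, mul_zero]
    · have hmem := abs_le.2 (h ⟨x, hQ.ne', rfl⟩)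
      rwa [abs_div, abs_of_pos hQ, div_le_iff₀ hQ] at hmem
  · rintro h _ ⟨x, hx, rfl⟩
    have hQ : 0 < L (x ^ 2) := (hpsd x).lt_of_ne' hx
    rw [mem_Icc, ← abs_le, abs_div, abs_of_pos hQ, div_le_iff₀ hQ]
    exact h x

end RayleighQuotients

theorem stmt_11 {A : Type*} [CommRing A] [Algebra ℝ A]
    (L : A →ₗ[ℝ] ℝ) (hpsd : ∀ x : A, 0 ≤ L (x ^ 2)) (hone : L 1 = 1)
    (hfin : ∀ a : A, BddAbove (Cset L a)) :
    ∀ a : A,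
      BddAbove (Rayleigh L a) ∧ BddBelow (Rayleigh L a) ∧
        sSup (Rayleigh L a) ≤ sSup (Cset L a) ∧
        -(sSup (Cset L a)) ≤ sInf (Rayleigh L a) ∧
        (sSup (Cset L a) = sSup (Rayleigh L a) ∨
          sSup (Cset L a) = -(sInf (Rayleigh L a))) := by
  intro a
  set R := Rayleigh L a
  set C := sSup (Cset L a)
  have hRC : R ⊆ Icc (-C) C :=
    (rayleigh_subset_Icc_iff hpsd).2 (abs_apply_mul_sq_le_sSup_cset_mul hpsd (hfin a))
  have hne : R.Nonempty := rayleigh_nonempty hone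
  have hbddA : BddAbove R := bddAbove_Icc.mono hRC
  have hbddB : BddBelow R := bddBelow_Icc.mono hRC
  have hsup : sSup R ≤ C := csSup_le hne fun r hr => (hRC hr).2
  have hinf : -C ≤ sInf R := le_csInf hne fun r hr => (hRC hr).1
  have hCM : C ≤ max (sSup R) (-sInf R) :=
    sSup_cset_le_of_abs_apply_mul_sq_le hpsd hone <| (rayleigh_subset_Icc_iff hpsd).1 <|
      (subset_Icc_csInf_csSup hbddB hbddA).trans <|
        Icc_subset_Icc (neg_le.1 (le_max_right _ _)) (le_max_left _ _)
  refine ⟨hbddA, hbddB, hsup, hinf, ?_⟩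
  rcases max_choice (sSup R) (-sInf R) with h | h <;> rw [h] at hCM
  · exact Or.inl (le_antisymm hCM hsup)
  · exact Or.inr (le_antisymm hCM (neg_le.1 hinf))
end

section
/- Let A be a unital commutative real algebra, L : A → ℝ linear positive semidefinite with L(1) = 1, C > 0 a constant and v : A → [0,∞) a function satisfying v(1) = 1 and v(a²) ≤ v(a)² for all a, such that |L(a)| ≤ C·v(a) for all a ∈ A. Then C_a := sup_{n≥1}(L(a^{2n}))^{1/(2n)} ≤ v(a) for every a ∈ A. -/
open Filter

def LogConvexSeq (t : ℕ → ℝ) : Prop :=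
  ∀ n, t (n + 1) ^ 2 ≤ t n * t (n + 2)

namespace LogConvexSeq

variable {t : ℕ → ℝ} (ht : LogConvexSeq t) (h0 : t 0 ≤ 1) (hnn : ∀ n, 0 ≤ t n)
include ht h0 hnn

theorem pow_succ_le_succ_pow (n : ℕ) : t n ^ (n + 1) ≤ t (n + 1) ^ n := by
  induction n with
  | zero => simpa using h0
  | succ n ih =>
    rcases (hnn (n + 1)).eq_or_lt with h | h
    · simp [← h, pow_nonneg (hnn (n + 2))]
    · refine le_of_mul_le_mul_left ?_ (pow_pos h n)
      calc t (n + 1) ^ n * t (n + 1) ^ (n + 2) = (t (n + 1) ^ 2) ^ (n + 1) := by ring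
        _ ≤ (t n * t (n + 2)) ^ (n + 1) := pow_le_pow_left₀ (sq_nonneg _) (ht n) _
        _ = t n ^ (n + 1) * t (n + 2) ^ (n + 1) := mul_pow _ _ _
        _ ≤ t (n + 1) ^ n * t (n + 2) ^ (n + 1) :=
          mul_le_mul_of_nonneg_right ih (pow_nonneg (hnn _) _)

theorem pow_le_pow {n m : ℕ} (hn : 1 ≤ n) (hnm : n ≤ m) : t n ^ m ≤ t m ^ n := by
  induction m, hnm using Nat.le_induction with
  | base => rfl
  | succ m hnm ih =>
    have hm : m ≠ 0 := by omega
    refine (pow_le_pow_iff_left₀ (pow_nonneg (hnn n) _) (pow_nonneg (hnn _) _) hm).1 ?_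
    calc (t n ^ (m + 1)) ^ m = (t n ^ m) ^ (m + 1) := by ring
      _ ≤ (t m ^ n) ^ (m + 1) := pow_le_pow_left₀ (pow_nonneg (hnn n) _) ih _
      _ = (t m ^ (m + 1)) ^ n := by ring
      _ ≤ (t (m + 1) ^ m) ^ n :=
        pow_le_pow_left₀ (pow_nonneg (hnn m) _) (ht.pow_succ_le_succ_pow h0 hnn m) _
      _ = (t (m + 1) ^ n) ^ m := by ring

theorem pow_le_of_pow_eq {y : ℝ} (hy : 0 ≤ y) {n m : ℕ} (hn : 1 ≤ n) (hnm : n ≤ m)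
    (hyn : y ^ n = t n) : y ^ m ≤ t m := by
  refine (pow_le_pow_iff_left₀ (pow_nonneg hy m) (hnn m) (by omega : n ≠ 0)).1 ?_
  calc (y ^ m) ^ n = t n ^ m := by rw [← hyn, ← pow_mul, ← pow_mul, mul_comm]
    _ ≤ t m ^ n := ht.pow_le_pow h0 hnn hn hnm

end LogConvexSeq

theorem le_of_frequently_pow_le_mul {x y : ℝ} (C : ℝ) (hy : 0 ≤ y)
    (h : ∃ᶠ n in atTop, x ^ n ≤ C * y ^ n) : x ≤ y := by
  by_contra! hyx
  have hx : 0 < x := hy.trans_lt hyx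
  have hlim : Tendsto (fun n : ℕ => C * (y / x) ^ n) atTop (nhds 0) := by
    simpa using (tendsto_pow_atTop_nhds_zero_of_lt_one (div_nonneg hy hx.le)
      ((div_lt_one hx).2 hyx)).const_mul C
  obtain ⟨n, hle, hlt⟩ := (h.and_eventually (hlim.eventually (gt_mem_nhds one_pos))).exists
  rw [div_pow, mul_div_assoc', div_lt_one (pow_pos hx n)] at hlt
  exact hle.not_gt hlt

section PositiveFunctional

variable {A : Type*} [CommRing A] [Algebra ℝ A] {L : A →ₗ[ℝ] ℝ} (hpsd : ∀ x : A, 0 ≤ L (x ^ 2))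
include hpsd

theorem sq_map_mul_le (x y : A) : L (x * y) ^ 2 ≤ L (x ^ 2) * L (y ^ 2) := by
  have hquad : ∀ r : ℝ, 0 ≤ L (y ^ 2) * (r * r) + 2 * L (x * y) * r + L (x ^ 2) := by
    intro r
    have hexp : (r • y + x) ^ 2 = (r * r) • y ^ 2 + (2 * r) • (x * y) + x ^ 2 := by
      simp only [Algebra.smul_def, map_mul, map_ofNat]
      ring
    have := hpsd (r • y + x)
    rw [hexp, map_add, map_add, map_smul, map_smul, smul_eq_mul, smul_eq_mul] at this
    linarith
  have := discrim_le_zero hquad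
  rw [discrim] at this
  nlinarith

theorem logConvexSeq_map_pow_two_mul (a : A) : LogConvexSeq fun k => L (a ^ (2 * k)) := by
  intro k
  have := sq_map_mul_le hpsd (a ^ k) (a ^ (k + 2))
  rwa [← pow_add, ← pow_mul, ← pow_mul, show k + (k + 2) = 2 * (k + 1) by ring,
    mul_comm k, mul_comm (k + 2)] at this

end PositiveFunctional

theorem le_pow_two_pow_of_map_sq_le {A : Type*} [Monoid A] {v : A → ℝ} (hv0 : ∀ a, 0 ≤ v a)
    (hvsq : ∀ a, v (a ^ 2) ≤ v a ^ 2) (a : A) (d : ℕ) : v (a ^ 2 ^ d) ≤ v a ^ 2 ^ d := by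
  induction d with
  | zero => simp
  | succ d ih =>
    calc v (a ^ 2 ^ (d + 1)) = v ((a ^ 2 ^ d) ^ 2) := by rw [← pow_mul, pow_succ]
      _ ≤ v (a ^ 2 ^ d) ^ 2 := hvsq _
      _ ≤ (v a ^ 2 ^ d) ^ 2 := pow_le_pow_left₀ (hv0 _) ih 2
      _ = v a ^ 2 ^ (d + 1) := by rw [← pow_mul, pow_succ]

theorem stmt_13_general {A : Type*} [CommRing A] [Algebra ℝ A]
    (L : A →ₗ[ℝ] ℝ) (hpsd : ∀ x : A, 0 ≤ L (x ^ 2)) (hone : L 1 = 1)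
    (C : ℝ) (hC : 0 < C) (v : A → ℝ) (hv0 : ∀ a : A, 0 ≤ v a)
    (hvsq : ∀ a : A, v (a ^ 2) ≤ (v a) ^ 2)
    (hbound : ∀ a : A, |L a| ≤ C * v a) :
    ∀ a : A, sSup (Cset L a) ≤ v a := by
  intro a
  refine Real.sSup_le ?_ (hv0 a)
  rintro _ ⟨n, hn, rfl⟩
  set t : ℕ → ℝ := fun k => L (a ^ (2 * k))
  have htnn (k : ℕ) : 0 ≤ t k := by simpa [t, ← pow_mul, mul_comm k] using hpsd (a ^ k)
  set x := t n ^ (((2 * n : ℕ) : ℝ))⁻¹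
  have hxn : (x ^ 2) ^ n = t n := by
    rw [← pow_mul, Real.rpow_inv_natCast_pow (htnn n) (by omega)]
  refine le_of_frequently_pow_le_mul C (hv0 a) (frequently_atTop.2 fun N => ?_)
  refine ⟨2 ^ (N + n + 1), (Nat.lt_two_pow_self).le.trans' (by omega), ?_⟩
  have hm : n ≤ 2 ^ (N + n) := (Nat.lt_two_pow_self).le.trans' (by omega)
  calc x ^ 2 ^ (N + n + 1) = (x ^ 2) ^ 2 ^ (N + n) := by rw [← pow_mul, pow_succ']
    _ ≤ t (2 ^ (N + n)) := (logConvexSeq_map_pow_two_mul hpsd a).pow_le_of_pow_eq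
        (by simp [hone]) htnn (sq_nonneg x) hn hm hxn
    _ ≤ |L (a ^ 2 ^ (N + n + 1))| := by rw [pow_succ' 2 (N + n)]; exact le_abs_self _
    _ ≤ C * v (a ^ 2 ^ (N + n + 1)) := hbound _
    _ ≤ C * v a ^ 2 ^ (N + n + 1) :=
        mul_le_mul_of_nonneg_left (le_pow_two_pow_of_map_sq_le hv0 hvsq a _) hC.le

theorem stmt_13 {A : Type*} [CommRing A] [Algebra ℝ A]
    (L : A →ₗ[ℝ] ℝ) (hpsd : ∀ x : A, 0 ≤ L (x ^ 2)) (hone : L 1 = 1)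
    (C : ℝ) (hC : 0 < C) (v : A → ℝ) (hv0 : ∀ a : A, 0 ≤ v a)
    (hv1 : v 1 = 1) (hvsq : ∀ a : A, v (a ^ 2) ≤ (v a) ^ 2)
    (hbound : ∀ a : A, |L a| ≤ C * v a) :
    ∀ a : A, sSup (Cset L a) ≤ v a :=
  stmt_13_general L hpsd hone C hC v hv0 hvsq hbound
end

section
/- Let A be a unital commutative real algebra, L : A → ℝ linear positive semidefinite with L(1) = 1 and all C_a = sup_{n≥1}(L(a^{2n}))^{1/(2n)} finite. Suppose L is represented by a positive Radon measure ν on K_L = {α ∈ X(A) : |α(b)| ≤ C_b for all b ∈ A}. Then a ∈ Q_L (i.e., L(b²a) ≥ 0 for all b) if and only if C_{C_a − a} ≤ C_a. -/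
open MeasureTheory

/-!
`ν` is a probability measure since `ν(K_L) = L(1) = 1`. If `C_{C_a - a} ≤ C_a`, then `|C_a - α(a)| ≤ C_a`, so `α(a) ≥ 0` on `K_L` and
`L(b²a) = ∫ α(b)² α(a) dν ≥ 0`. Conversely, testing `a ∈ Q_L` against `b = (C_a - a)^n` gives
`∫ (C_a - α(a))^{2n} α(a) dν ≥ 0` for all `n`. On `{α(a) < -ε}` the weight `(C_a - α(a))^{2n}` is at
least `(C_a + ε)^{2n}`, while on `{α(a) ≥ 0}` it is at most `C_a^{2n}`; letting `n → ∞` shows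
`α(a) ≥ 0` for `ν`-a.e. `α`, whence `L((C_a - a)^{2n}) = ∫ (C_a - α(a))^{2n} dν ≤ C_a^{2n}`.
-/

open Filter Topology

section Char

variable {A : Type*} [CommRing A] [Algebra ℝ A] {α : A → ℝ}

def IsChar.toAlgHom (h : IsChar α) : A →ₐ[ℝ] ℝ where
  toFun := α
  map_one' := h.1
  map_mul' := h.2.2.1
  map_zero' := by simpa using h.2.2.2 0 0
  map_add' := h.2.1
  commutes' c := by simpa [Algebra.algebraMap_eq_smul_one, h.1] using h.2.2.2 c 1

theorem IsChar.map_mul_s14 (h : IsChar α) (x y : A) : α (x * y) = α x * α y := h.2.2.1 x y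

theorem IsChar.map_sub (h : IsChar α) (x y : A) : α (x - y) = α x - α y :=
  _root_.map_sub h.toAlgHom x y

theorem IsChar.map_pow (h : IsChar α) (x : A) (n : ℕ) : α (x ^ n) = α x ^ n :=
  _root_.map_pow h.toAlgHom x n

theorem IsChar.map_algebraMap (h : IsChar α) (c : ℝ) : α (algebraMap ℝ A c) = c :=
  h.toAlgHom.commutes c

theorem IsChar.map_algebraMap_sub_pow (h : IsChar α) (c : ℝ) (a : A) (n : ℕ) :
    α ((algebraMap ℝ A c - a) ^ n) = (c - α a) ^ n := by
  rw [h.map_pow, h.map_sub, h.map_algebraMap]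

end Char

section Cset

variable {A : Type*} [CommRing A] [Algebra ℝ A] {L : A →ₗ[ℝ] ℝ}

theorem sSup_Cset_nonneg (hpsd : ∀ x : A, 0 ≤ L (x ^ 2)) (a : A) : 0 ≤ sSup (Cset L a) := by
  refine Real.sSup_nonneg ?_
  rintro x ⟨n, -, rfl⟩
  have := hpsd (a ^ n)
  rw [← pow_mul'] at this
  positivity

theorem sSup_Cset_le (hpsd : ∀ x : A, 0 ≤ L (x ^ 2)) {a : A} {M : ℝ} (hM : 0 ≤ M)
    (h : ∀ n : ℕ, 1 ≤ n → L (a ^ (2 * n)) ≤ M ^ (2 * n)) : sSup (Cset L a) ≤ M := by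
  refine Real.sSup_le ?_ hM
  rintro x ⟨n, hn, rfl⟩
  have h0 := hpsd (a ^ n)
  rw [← pow_mul'] at h0
  rw [Real.rpow_inv_le_iff_of_pos h0 hM (by positivity), Real.rpow_natCast]
  exact h n hn

end Cset

section Real

theorem sub_pow_mul_le_of_abs_le {t C : ℝ} (ht : |t| ≤ C) (n : ℕ) :
    (C - t) ^ (2 * n) * t ≤ C ^ (2 * n) * C := by
  obtain ⟨ht₁, ht₂⟩ := abs_le.mp ht
  rcases le_or_gt t 0 with ht0 | ht0
  · have : 0 ≤ (C - t) ^ (2 * n) := (even_two_mul n).pow_nonneg _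
    nlinarith [(even_two_mul n).pow_nonneg C, abs_nonneg t]
  · exact mul_le_mul (pow_le_pow_left₀ (by linarith) (by linarith) _) ht₂ ht0.le
      (pow_nonneg (by linarith) _)

theorem sub_pow_mul_le_of_le_neg {t C ε : ℝ} (hC : 0 ≤ C) (hε : 0 ≤ ε) (ht : t ≤ -ε) (n : ℕ) :
    (C - t) ^ (2 * n) * t ≤ -(ε * (C + ε) ^ (2 * n)) := by
  have hpow : (C + ε) ^ (2 * n) ≤ (C - t) ^ (2 * n) :=
    pow_le_pow_left₀ (by linarith) (by linarith) _
  nlinarith [pow_nonneg (show 0 ≤ C + ε by linarith) (2 * n)]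

end Real

section Measure

variable {Ω : Type*} [MeasurableSpace Ω] {μ : Measure Ω}

theorem isProbabilityMeasure_of_measureReal_univ (h : μ.real Set.univ = 1) :
    IsProbabilityMeasure μ := by
  rwa [isProbabilityMeasure_iff, ← ENNReal.toReal_eq_one_iff]

variable [IsFiniteMeasure μ] {f : Ω → ℝ} {C : ℝ}

theorem integrable_sub_pow_mul (hf : Measurable f) (hfC : ∀ x, |f x| ≤ C) (n : ℕ) :
    Integrable (fun x => (C - f x) ^ (2 * n) * f x) μ := by
  refine .of_bound (((measurable_const.sub hf).pow_const _).mul hf).aestronglyMeasurable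
    ((2 * C) ^ (2 * n) * C) (.of_forall fun x => ?_)
  obtain ⟨h₁, h₂⟩ := abs_le.mp (hfC x)
  rw [Real.norm_eq_abs, abs_mul, abs_pow]
  exact mul_le_mul (pow_le_pow_left₀ (abs_nonneg _) (abs_le.mpr ⟨by linarith, by linarith⟩) _)
    (hfC x) (abs_nonneg _) (pow_nonneg (by linarith [abs_nonneg (f x)]) _)

theorem measureReal_lt_neg_le (hf : Measurable f) (hC : 0 ≤ C) (hfC : ∀ x, |f x| ≤ C) {ε : ℝ}
    (hε : 0 < ε) (n : ℕ) (h : 0 ≤ ∫ x, (C - f x) ^ (2 * n) * f x ∂μ) :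
    μ.real {x | f x < -ε} ≤ (C / (C + ε)) ^ (2 * n) * (C * μ.real Set.univ / ε) := by
  set S := {x | f x < -ε}
  have hS : MeasurableSet S := hf measurableSet_Iio
  have hpt : ∀ x, (C - f x) ^ (2 * n) * f x + S.indicator (fun _ => ε * (C + ε) ^ (2 * n)) x
      ≤ C ^ (2 * n) * C := by
    intro x
    by_cases hx : f x < -ε
    · rw [Set.indicator_of_mem (show x ∈ S from hx)]
      have := sub_pow_mul_le_of_le_neg hC hε.le hx.le n
      linarith [show 0 ≤ C ^ (2 * n) * C by positivity]
    · rw [Set.indicator_of_notMem (show x ∉ S from hx), add_zero]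
      exact sub_pow_mul_le_of_abs_le (hfC x) n
  have hg := integrable_sub_pow_mul (μ := μ) hf hfC n
  have hind := (integrable_const (μ := μ) (ε * (C + ε) ^ (2 * n))).indicator hS
  have hint := integral_mono (hg.add hind) (integrable_const _) hpt
  rw [integral_add' hg hind, integral_indicator_const _ hS, integral_const, smul_eq_mul, smul_eq_mul] at hint
  rw [div_pow, div_mul_div_comm, le_div_iff₀ (by positivity)]
  linarith

theorem ae_nonneg_of_integral_sub_pow_mul_nonneg (hf : Measurable f) (hC : 0 ≤ C)
    (hfC : ∀ x, |f x| ≤ C) (h : ∀ n : ℕ, 0 ≤ ∫ x, (C - f x) ^ (2 * n) * f x ∂μ) :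
    ∀ᵐ x ∂μ, 0 ≤ f x := by
  have hnull : ∀ ε : ℝ, 0 < ε → μ {x | f x < -ε} = 0 := by
    intro ε hε
    have hr : C / (C + ε) < 1 := (div_lt_one (by linarith)).mpr (by linarith)
    have htend : Tendsto (fun n : ℕ => (C / (C + ε)) ^ (2 * n) * (C * μ.real Set.univ / ε))
        atTop (𝓝 0) := by
      simpa [pow_mul] using (tendsto_pow_atTop_nhds_zero_of_lt_one (by positivity)
        (pow_lt_one₀ (by positivity) hr two_ne_zero)).mul_const (C * μ.real Set.univ / ε)
    exact (measureReal_eq_zero_iff).mp <| le_antisymm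
      (ge_of_tendsto' htend fun n => measureReal_lt_neg_le hf hC hfC hε n (h n)) measureReal_nonneg
  refine ae_iff.mpr (measure_mono_null ?_
    (measure_iUnion_null fun k : ℕ => hnull (1 / (k + 1)) (by positivity)))
  intro x hx
  simp only [Set.mem_ofPred_eq, not_le] at hx
  obtain ⟨k, hk⟩ := exists_nat_one_div_lt (neg_pos.mpr hx)
  exact Set.mem_iUnion.mpr ⟨k, by simp only [Set.mem_ofPred_eq]; linarith⟩

theorem integral_sub_pow_le (h0 : ∀ᵐ x ∂μ, 0 ≤ f x) (hfC : ∀ x, f x ≤ C) (k : ℕ) :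
    ∫ x, (C - f x) ^ k ∂μ ≤ C ^ k * μ.real Set.univ := by
  have := integral_mono_of_nonneg (.of_forall fun x => pow_nonneg (sub_nonneg.2 (hfC x)) k)
    (integrable_const (C ^ k)) (h0.mono fun x hx => pow_le_pow_left₀ (sub_nonneg.2 (hfC x))
      (by linarith) k)
  rwa [integral_const, smul_eq_mul, mul_comm] at this

end Measure

theorem stmt_14_general {A : Type*} [CommRing A] [Algebra ℝ A]
    (L : A →ₗ[ℝ] ℝ) (hpsd : ∀ x : A, 0 ≤ L (x ^ 2)) (hone : L 1 = 1)
    (KL : Set (A → ℝ))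
    (hKL : KL = {α : A → ℝ | IsChar α ∧ ∀ b : A, |α b| ≤ sSup (Cset L b)})
    (ν : Measure KL) (hrep : ∀ a : A, L a = ∫ α : KL, (α : A → ℝ) a ∂ν) :
    ∀ a : A,
      (∀ b : A, 0 ≤ L (b ^ 2 * a)) ↔
        sSup (Cset L (algebraMap ℝ A (sSup (Cset L a)) - a)) ≤ sSup (Cset L a) := by
  have hK : ∀ β : KL, IsChar (β : A → ℝ) ∧ ∀ b, |(β : A → ℝ) b| ≤ sSup (Cset L b) :=
    fun β => (Set.ext_iff.mp hKL β).mp β.2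
  have hmeas : ∀ b : A, Measurable fun β : KL => (β : A → ℝ) b :=
    fun b => (measurable_pi_apply b).comp measurable_subtype_coe
  have : IsProbabilityMeasure ν := isProbabilityMeasure_of_measureReal_univ <| by
    simpa [hone, fun β : KL => (hK β).1.1] using (hrep 1).symm
  intro a
  set C := sSup (Cset L a)
  have hC : 0 ≤ C := sSup_Cset_nonneg hpsd a
  have hshift : ∀ (β : KL) (n : ℕ),
      (β : A → ℝ) ((algebraMap ℝ A C - a) ^ n) = (C - (β : A → ℝ) a) ^ n :=
    fun β => (hK β).1.map_algebraMap_sub_pow C a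
  constructor
  · intro hq
    have hae : ∀ᵐ β : KL ∂ν, 0 ≤ (β : A → ℝ) a := by
      refine ae_nonneg_of_integral_sub_pow_mul_nonneg (hmeas a) hC (fun β => (hK β).2 a)
        fun n => ?_
      have := hq ((algebraMap ℝ A C - a) ^ n)
      rw [← pow_mul', hrep] at this
      refine this.trans_eq (integral_congr_ae (.of_forall fun β => ?_))
      simp only [(hK β).1.map_mul_s14, hshift]
    refine sSup_Cset_le hpsd hC fun n _ => ?_
    rw [hrep]
    simp_rw [hshift]
    simpa using integral_sub_pow_le hae (fun β => (abs_le.mp ((hK β).2 a)).2) (2 * n)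
  · intro hCa b
    rw [hrep]
    refine integral_nonneg fun β => ?_
    have hβ := ((hK β).2 _).trans hCa
    rw [(hK β).1.map_sub, (hK β).1.map_algebraMap] at hβ
    simp only [(hK β).1.map_mul_s14, (hK β).1.map_pow]
    exact mul_nonneg (sq_nonneg _) (by linarith [(abs_le.mp hβ).2])

theorem stmt_14 {A : Type*} [CommRing A] [Algebra ℝ A]
    (L : A →ₗ[ℝ] ℝ) (hpsd : ∀ x : A, 0 ≤ L (x ^ 2)) (hone : L 1 = 1)
    (hfin : ∀ a : A, BddAbove (Cset L a))
    (KL : Set (A → ℝ))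
    (hKL : KL = {α : A → ℝ | IsChar α ∧ ∀ b : A, |α b| ≤ sSup (Cset L b)})
    (ν : Measure KL) (hrep : ∀ a : A, L a = ∫ α : KL, (α : A → ℝ) a ∂ν) :
    ∀ a : A,
      (∀ b : A, 0 ≤ L (b ^ 2 * a)) ↔
        sSup (Cset L (algebraMap ℝ A (sSup (Cset L a)) - a)) ≤ sSup (Cset L a) :=
  stmt_14_general L hpsd hone KL hKL ν hrep
end

section
/- Let A be a unital commutative real algebra, L : A → ℝ linear positive semidefinite with L(1)=1. For a ∈ A, if M ≥ 0 is a real number with M − a² ∈ Q_L (i.e., L(b²(M − a²)) ≥ 0 for all b), then L(a^{2n}) ≤ Mⁿ for all n ∈ ℕ; consequently C_a ≤ √M and C_{a²} ≤ inf{M ≥ 0 : M − a² ∈ Q_L}. -/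
lemma key_bound {A : Type*} [CommRing A] [Algebra ℝ A]
    (L : A →ₗ[ℝ] ℝ) (hone : L 1 = 1)
    (a : A) (M : ℝ) (hM : 0 ≤ M)
    (hQ : ∀ b : A, 0 ≤ L (b ^ 2 * (algebraMap ℝ A M - a ^ 2))) :
    ∀ n : ℕ, L (a ^ (2 * n)) ≤ M ^ n := by
  intro n
  induction n with
  | zero => simp [hone]
  | succ n ih =>
    have hb := hQ (a ^ n)
    have hrw : (a ^ n) ^ 2 * (algebraMap ℝ A M - a ^ 2)
        = M • a ^ (2 * n) - a ^ (2 * (n + 1)) := by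
      rw [Algebra.algebraMap_eq_smul_one, mul_sub, mul_smul_comm, mul_one,
        ← pow_mul, mul_comm n 2, ← pow_add]
      ring_nf
    rw [hrw, map_sub, map_smul, smul_eq_mul, sub_nonneg] at hb
    calc L (a ^ (2 * (n + 1))) ≤ M * L (a ^ (2 * n)) := hb
      _ ≤ M * M ^ n := by exact mul_le_mul_of_nonneg_left ih hM
      _ = M ^ (n + 1) := (pow_succ' M n).symm

lemma sup_bound {A : Type*} [CommRing A] [Algebra ℝ A]
    (L : A →ₗ[ℝ] ℝ) (hpsd : ∀ x : A, 0 ≤ L (x ^ 2)) (hone : L 1 = 1)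
    (a : A) (M : ℝ) (hM : 0 ≤ M)
    (hQ : ∀ b : A, 0 ≤ L (b ^ 2 * (algebraMap ℝ A M - a ^ 2))) :
    sSup (Cset L a) ≤ Real.sqrt M := by
  apply Real.sSup_le _ (Real.sqrt_nonneg M)
  rintro x ⟨n, hn, rfl⟩
  have hpos : 0 ≤ L (a ^ (2 * n)) := by
    have := hpsd (a ^ n); rwa [← pow_mul, mul_comm n 2] at this
  have hle := key_bound L hone a M hM hQ n
  have hexp : (0:ℝ) ≤ (((2 * n : ℕ) : ℝ))⁻¹ := by positivity
  calc (L (a ^ (2 * n))) ^ (((2 * n : ℕ) : ℝ))⁻¹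
      ≤ (M ^ n) ^ (((2 * n : ℕ) : ℝ))⁻¹ := Real.rpow_le_rpow hpos hle hexp
    _ = Real.sqrt M := by
        rw [← Real.rpow_natCast M n, ← Real.rpow_mul hM, Real.sqrt_eq_rpow]
        congr 1
        have hn' : (n : ℝ) ≠ 0 := Nat.cast_ne_zero.mpr (by omega)
        push_cast
        field_simp

theorem stmt_15 {A : Type*} [CommRing A] [Algebra ℝ A]
    (L : A →ₗ[ℝ] ℝ) (hpsd : ∀ x : A, 0 ≤ L (x ^ 2)) (hone : L 1 = 1)
    (a : A) (M : ℝ) (hM : 0 ≤ M)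
    (hQ : ∀ b : A, 0 ≤ L (b ^ 2 * (algebraMap ℝ A M - a ^ 2))) :
    (∀ n : ℕ, L (a ^ (2 * n)) ≤ M ^ n) ∧
      sSup (Cset L a) ≤ Real.sqrt M ∧
      sSup (Cset L (a ^ 2)) ≤
        sInf {M' : ℝ | 0 ≤ M' ∧ ∀ b : A, 0 ≤ L (b ^ 2 * (algebraMap ℝ A M' - a ^ 2))} := by
  refine ⟨key_bound L hone a M hM hQ, sup_bound L hpsd hone a M hM hQ, ?_⟩
  refine le_csInf ⟨M, show _ ∧ _ from ⟨hM, hQ⟩⟩ ?_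
  rintro M' ⟨hM', hQ'⟩
  apply Real.sSup_le _ hM'
  rintro x ⟨n, hn, rfl⟩
  have hpos : 0 ≤ L ((a ^ 2) ^ (2 * n)) := by
    have := hpsd ((a ^ 2) ^ n); rwa [← pow_mul, mul_comm n 2] at this
  have hle : L ((a ^ 2) ^ (2 * n)) ≤ M' ^ (2 * n) := by
    have := key_bound L hone a M' hM' hQ' (2 * n)
    rwa [pow_mul] at this
  have hexp : (0:ℝ) ≤ (((2 * n : ℕ) : ℝ))⁻¹ := by positivity
  calc (L ((a ^ 2) ^ (2 * n))) ^ (((2 * n : ℕ) : ℝ))⁻¹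
      ≤ (M' ^ (2 * n)) ^ (((2 * n : ℕ) : ℝ))⁻¹ := Real.rpow_le_rpow hpos hle hexp
    _ = M' := by
        rw [← Real.rpow_natCast M' (2 * n), ← Real.rpow_mul hM',
          mul_inv_cancel₀ (by exact_mod_cast by omega : ((2 * n : ℕ) : ℝ) ≠ 0),
          Real.rpow_one]
end

section
/- Let S be a unital commutative semigroup with involution * and f : S → ℂ a positive semidefinite function. Then the function s ↦ R_s := sup_{n≥1} (f(sⁿ(s*)ⁿ))^{1/(2n)}, when finite for all s, is an absolute value on S: R_1 = 1, R_{st} ≤ R_s R_t, and R_{s*} = R_s; moreover |f(s)| ≤ R_s for all s ∈ S. -/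
open Complex

/-- The set of values `f(sⁿ(s*)ⁿ)^{1/(2n)}`, `n ≥ 1`. -/
def Rset {S : Type*} [CommMonoid S] [StarMul S] (f : S → ℂ) (s : S) : Set ℝ :=
  {x : ℝ | ∃ n : ℕ, 1 ≤ n ∧ x = (f (s ^ n * (star s) ^ n)).re ^ (((2 * n : ℕ) : ℝ))⁻¹}

/-!
Submultiplicativity and the bound `|f s| ≤ R_s` come from the Cauchy–Schwarz inequality
`|f(x*y)|² ≤ f(x*x) f(y*y)`. With `x = sⁿ(s*)ⁿ`, `y = tⁿ(t*)ⁿ` commutativity gives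
`x*y = (st)ⁿ((st)*)ⁿ` and `x*x = s²ⁿ(s*)²ⁿ`, so the `n`-th term of `R_{st}` is bounded by the
geometric mean of the `2n`-th terms of `R_s` and `R_t`. With `x = 1`, `y = s` it gives
`|f s|² ≤ f(s s*)`, the first term of `R_s`.
-/

open ComplexConjugate

def PosSemidefKernel {ι : Type*} (K : ι → ι → ℂ) : Prop :=
  ∀ (n : ℕ) (s : Fin n → ι) (c : Fin n → ℂ),
    ∃ r : ℝ, 0 ≤ r ∧ (∑ j, ∑ k, c j * (starRingEnd ℂ) (c k) * K (s j) (s k)) = (r : ℂ)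

namespace PosSemidefKernel

variable {ι : Type*} {K : ι → ι → ℂ}

lemma exists_sum_two_eq (hK : PosSemidefKernel K) (x y : ι) (c₁ c₂ : ℂ) :
    ∃ r : ℝ, 0 ≤ r ∧
      c₁ * conj c₁ * K x x + c₁ * conj c₂ * K x y + c₂ * conj c₁ * K y x
        + c₂ * conj c₂ * K y y = r := by
  obtain ⟨r, hr, h⟩ := hK 2 ![x, y] ![c₁, c₂]
  refine ⟨r, hr, ?_⟩
  rw [← h]
  simp only [Fin.sum_univ_two, Matrix.cons_val_zero, Matrix.cons_val_one]
  ring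

lemma exists_apply_self_eq (hK : PosSemidefKernel K) (x : ι) :
    ∃ r : ℝ, 0 ≤ r ∧ K x x = r := by
  obtain ⟨r, hr, h⟩ := hK 1 ![x] ![1]
  exact ⟨r, hr, by simpa using h⟩

lemma re_apply_self_nonneg (hK : PosSemidefKernel K) (x : ι) : 0 ≤ (K x x).re := by
  obtain ⟨r, hr, h⟩ := hK.exists_apply_self_eq x
  simpa [h] using hr

lemma apply_swap (hK : PosSemidefKernel K) (x y : ι) : K y x = conj (K x y) := by
  obtain ⟨a, -, ha⟩ := hK.exists_apply_self_eq x
  obtain ⟨d, -, hd⟩ := hK.exists_apply_self_eq y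
  obtain ⟨r₁, -, h₁⟩ := hK.exists_sum_two_eq x y 1 1
  obtain ⟨r₂, -, h₂⟩ := hK.exists_sum_two_eq x y I 1
  rw [ha, hd] at h₁ h₂
  have him := congrArg im h₁
  have hre := congrArg im h₂
  simp only [map_one, one_mul, mul_one, conj_I, add_im, mul_im, ofReal_im, ofReal_re, I_re,
    I_im, neg_re, neg_im] at him hre
  apply Complex.ext <;> simp only [conj_re, conj_im] <;> linarith

lemma normSq_apply_le (hK : PosSemidefKernel K) (x y : ι) :
    normSq (K x y) ≤ (K x x).re * (K y y).re := by
  obtain ⟨a, ha, hxx⟩ := hK.exists_apply_self_eq x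
  obtain ⟨d, hd, hyy⟩ := hK.exists_apply_self_eq y
  -- the form at `(conj (K x y), -t)` is the real quadratic `d t² - 2|K x y|² t + |K x y|² a`
  have hquad : ∀ t : ℝ,
      0 ≤ d * (t * t) + (-2 * normSq (K x y)) * t + normSq (K x y) * a := by
    intro t
    obtain ⟨r, hr, h⟩ := hK.exists_sum_two_eq x y (conj (K x y)) (-t)
    rw [hxx, hyy, hK.apply_swap x y] at h
    have h' : ((d * (t * t) + (-2 * normSq (K x y)) * t + normSq (K x y) * a : ℝ) : ℂ) = r := by
      rw [← h]
      push_cast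
      rw [normSq_eq_conj_mul_self]
      simp only [map_neg, conj_ofReal, conj_conj]
      ring
    exact (ofReal_injective h').symm ▸ hr
  have hdisc := discrim_le_zero hquad
  simp only [discrim, hxx, hyy, ofReal_re] at hdisc ⊢
  nlinarith [normSq_nonneg (K x y), mul_nonneg ha hd]

end PosSemidefKernel

lemma Real.rpow_le_rpow_half_mul_rpow_half {a b c e : ℝ} (ha : 0 ≤ a) (hb : 0 ≤ b) (hc : 0 ≤ c)
    (he : 0 ≤ e) (habc : a ^ 2 ≤ b * c) : a ^ e ≤ b ^ (e / 2) * c ^ (e / 2) :=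
  calc a ^ e = (a ^ 2) ^ (e / 2) := by
        rw [← Real.rpow_natCast, ← Real.rpow_mul ha]; ring_nf
    _ ≤ (b * c) ^ (e / 2) := by gcongr
    _ = b ^ (e / 2) * c ^ (e / 2) := Real.mul_rpow hb hc

section Rset

variable {S : Type*} [CommMonoid S] [StarMul S] {f : S → ℂ}

lemma pow_mul_star_pow_eq (s : S) (n : ℕ) : s ^ n * star s ^ n = star (s ^ n) * s ^ n := by
  rw [star_pow, mul_comm]

lemma re_apply_pow_mul_star_pow_nonneg (hf : PosSemidefKernel fun x y : S => f (star x * y))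
    (s : S) (n : ℕ) : 0 ≤ (f (s ^ n * star s ^ n)).re := by
  rw [pow_mul_star_pow_eq]
  exact hf.re_apply_self_nonneg (s ^ n)

lemma le_sSup_Rset (hs : BddAbove (Rset f s)) {n : ℕ} (hn : 1 ≤ n) :
    (f (s ^ n * star s ^ n)).re ^ (((2 * n : ℕ) : ℝ))⁻¹ ≤ sSup (Rset f s) :=
  le_csSup hs ⟨n, hn, rfl⟩

lemma sSup_Rset_nonneg (hf : PosSemidefKernel fun x y : S => f (star x * y))
    (hs : BddAbove (Rset f s)) : 0 ≤ sSup (Rset f s) :=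
  (Real.rpow_nonneg (re_apply_pow_mul_star_pow_nonneg hf s 1) _).trans (le_sSup_Rset hs le_rfl)

lemma Rset_one (h1 : f 1 = 1) : Rset f 1 = {1} := by
  ext x
  simp only [Rset, one_pow, star_one, one_mul, h1, one_re, Real.one_rpow, Set.mem_ofPred_eq,
    Set.mem_singleton_iff]
  exact ⟨fun ⟨_, _, hx⟩ => hx, fun hx => ⟨1, le_rfl, hx⟩⟩

lemma Rset_star (s : S) : Rset f (star s) = Rset f s := by
  simp only [Rset, star_star, mul_comm (star s ^ _)]

lemma sq_re_apply_mul_le (hf : PosSemidefKernel fun x y : S => f (star x * y)) (s t : S)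
    (n : ℕ) :
    (f ((s * t) ^ n * star (s * t) ^ n)).re ^ 2 ≤
      (f (s ^ (2 * n) * star s ^ (2 * n))).re * (f (t ^ (2 * n) * star t ^ (2 * n))).re := by
  have hcs := hf.normSq_apply_le (s ^ n * star s ^ n) (t ^ n * star t ^ n)
  simp only [star_mul', star_pow, star_star, mul_pow, two_mul, pow_add] at hcs ⊢
  rw [sq]
  refine (re_sq_le_normSq _).trans (le_of_eq_of_le ?_ (hcs.trans_eq ?_))
  · congr 2; ac_rfl
  · congr 3 <;> ac_rfl

lemma sSup_Rset_mul_le (hf : PosSemidefKernel fun x y : S => f (star x * y))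
    (hfin : ∀ s : S, BddAbove (Rset f s)) (s t : S) :
    sSup (Rset f (s * t)) ≤ sSup (Rset f s) * sSup (Rset f t) := by
  refine csSup_le ⟨_, 1, le_rfl, rfl⟩ ?_
  rintro _ ⟨n, hn, rfl⟩
  have hexp : (((2 * n : ℕ) : ℝ))⁻¹ / 2 = (((2 * (2 * n) : ℕ) : ℝ))⁻¹ := by
    push_cast; ring
  calc _ ≤ (f (s ^ (2 * n) * star s ^ (2 * n))).re ^ ((((2 * n : ℕ) : ℝ))⁻¹ / 2)
          * (f (t ^ (2 * n) * star t ^ (2 * n))).re ^ ((((2 * n : ℕ) : ℝ))⁻¹ / 2) :=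
        Real.rpow_le_rpow_half_mul_rpow_half (re_apply_pow_mul_star_pow_nonneg hf _ _)
          (re_apply_pow_mul_star_pow_nonneg hf _ _) (re_apply_pow_mul_star_pow_nonneg hf _ _)
          (by positivity) (sq_re_apply_mul_le hf s t n)
    _ ≤ sSup (Rset f s) * sSup (Rset f t) := by
        rw [hexp]
        exact mul_le_mul (le_sSup_Rset (hfin s) (by omega)) (le_sSup_Rset (hfin t) (by omega))
          (Real.rpow_nonneg (re_apply_pow_mul_star_pow_nonneg hf _ _) _)
          (sSup_Rset_nonneg hf (hfin s))

lemma norm_le_sSup_Rset (h1 : f 1 = 1) (hf : PosSemidefKernel fun x y : S => f (star x * y))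
    (hs : BddAbove (Rset f s)) : ‖f s‖ ≤ sSup (Rset f s) := by
  have hcs := hf.normSq_apply_le 1 s
  simp only [star_one, one_mul, mul_one, h1, one_re] at hcs
  refine le_trans ?_ (le_sSup_Rset hs le_rfl)
  have hexp : (((2 * 1 : ℕ) : ℝ))⁻¹ = 1 / 2 := by norm_num
  rw [norm_def, Real.sqrt_eq_rpow, pow_one, pow_one, mul_comm s, hexp]
  exact Real.rpow_le_rpow (normSq_nonneg _) hcs (by norm_num)

end Rset

theorem stmt_17 {S : Type*} [CommMonoid S] [StarMul S]
    (f : S → ℂ) (hnorm : f 1 = 1)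
    (hpsd : ∀ (n : ℕ) (s : Fin n → S) (c : Fin n → ℂ),
      ∃ r : ℝ, 0 ≤ r ∧
        (∑ j, ∑ k, c j * (starRingEnd ℂ) (c k) * f (star (s j) * s k)) = (r : ℂ))
    (hfin : ∀ s : S, BddAbove (Rset f s)) :
    sSup (Rset f 1) = 1 ∧
      (∀ s t : S, sSup (Rset f (s * t)) ≤ sSup (Rset f s) * sSup (Rset f t)) ∧
      (∀ s : S, sSup (Rset f (star s)) = sSup (Rset f s)) ∧
      (∀ s : S, ‖f s‖ ≤ sSup (Rset f s)) := by
  have hf : PosSemidefKernel fun x y : S => f (star x * y) := hpsd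
  exact ⟨by rw [Rset_one hnorm, csSup_singleton], sSup_Rset_mul_le hf hfin,
    fun s => by rw [Rset_star], fun s => norm_le_sSup_Rset hnorm hf (hfin s)⟩
end

section
/- Let f : ℕ² → ℂ be positive semidefinite on the semigroup (ℕ², +) with involution (m,n)* = (n,m), and suppose there exist C > 0 and r > 0 with f(n,n) ≤ C r^{2n} for all n ∈ ℕ. Then R_{(m,n)} := sup_{k≥1}(f(k(m+n), k(m+n)))^{1/(2k)} ≤ r^{m+n} for every (m,n), and in particular |f(m,n)| ≤ C^{1/2} r^{m+n} (up to the normalization f(0,0)), so f is exponentially bounded with bound r^{m+n}. -/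
/-!
The kernel `(s, t) ↦ f (s* + t)` is positive semidefinite, so its `2 × 2` principal minors give
Cauchy–Schwarz `|f (s* + t)|² ≤ f (s* + s) f (t* + t)`. Taking `s = 0` and using `f (0, 0) = 1`
this gives `|f (m, n)|² ≤ f (m + n, m + n)` and `a p ^ 2 ≤ a (2 p)` for `a p = f (p, p)`. Iterating,
`a p ^ 2 ^ j ≤ a (2 ^ j p) ≤ C r ^ (2 ^ (j + 1) p)`, and since the constant `C` does not grow with
`j`, taking `2 ^ j`-th roots gives `a p ≤ r ^ (2 p)`.
-/

open scoped ComplexOrder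
open ComplexConjugate

namespace Matrix

theorem isHermitian_of_forall_dotProduct_mulVec_nonneg {n : Type*} [Fintype n] [DecidableEq n]
    {M : Matrix n n ℂ} (hM : ∀ x, 0 ≤ star x ⬝ᵥ (M *ᵥ x)) : M.IsHermitian := by
  rw [← isSymmetric_toEuclideanLin_iff, LinearMap.isSymmetric_iff_inner_map_self_real]
  intro v
  rw [RCLike.conj_eq_iff_im, ← inner_conj_symm, RCLike.conj_im, neg_eq_zero,
    EuclideanSpace.inner_eq_star_dotProduct, dotProduct_comm]
  exact (RCLike.nonneg_iff.mp (hM v.ofLp)).2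

theorem posSemidef_submatrix_of_forall_sum_nonneg {ι : Type*} {K : Matrix ι ι ℂ}
    (hK : ∀ (n : ℕ) (s : Fin n → ι) (c : Fin n → ℂ),
      0 ≤ ∑ j, ∑ k, c j * conj (c k) * K (s j) (s k))
    {n : ℕ} (s : Fin n → ι) : (K.submatrix s s).PosSemidef := by
  have hform : ∀ x, 0 ≤ star x ⬝ᵥ (K.submatrix s s *ᵥ x) := by
    intro x
    convert hK n s (star x) using 1
    simp only [dotProduct, mulVec, Finset.mul_sum, Pi.star_apply, RCLike.star_def,
      Complex.conj_conj, submatrix_apply]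
    ac_rfl
  exact .of_dotProduct_mulVec_nonneg (isHermitian_of_forall_dotProduct_mulVec_nonneg hform) hform

theorem PosSemidef.norm_sq_apply_le {𝕜 ι : Type*} [RCLike 𝕜] {A : Matrix ι ι 𝕜}
    (hA : A.PosSemidef) (i j : ι) :
    ‖A i j‖ ^ 2 ≤ RCLike.re (A i i) * RCLike.re (A j j) := by
  have hdet := (hA.submatrix ![i, j]).det_nonneg
  rw [det_fin_two] at hdet
  simp only [submatrix_apply, Matrix.cons_val_zero, Matrix.cons_val_one] at hdet
  rw [← hA.isHermitian.apply j i, ← hA.isHermitian.coe_re_apply_self i,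
    ← hA.isHermitian.coe_re_apply_self j, RCLike.star_def, RCLike.mul_conj] at hdet
  have := (RCLike.nonneg_iff.mp hdet).1
  simp only [map_sub, ← RCLike.ofReal_mul, ← RCLike.ofReal_pow, RCLike.ofReal_re] at this
  linarith

end Matrix

/-- Positive semidefiniteness on `ℕ²` with the involution `(m, n)* = (n, m)`: the argument of `f`
is `s j* + s k`. -/
def IsPosSemidefNatProd (f : ℕ × ℕ → ℂ) : Prop :=
  ∀ (n : ℕ) (s : Fin n → ℕ × ℕ) (c : Fin n → ℂ),
    0 ≤ ∑ j, ∑ k, c j * conj (c k) * f ((s j).2 + (s k).1, (s j).1 + (s k).2)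

namespace IsPosSemidefNatProd

variable {f : ℕ × ℕ → ℂ}

theorem posSemidef_submatrix (hf : IsPosSemidefNatProd f) {n : ℕ} (s : Fin n → ℕ × ℕ) :
    (Matrix.submatrix (fun u v : ℕ × ℕ ↦ f (u.2 + v.1, u.1 + v.2)) s s).PosSemidef :=
  Matrix.posSemidef_submatrix_of_forall_sum_nonneg
    (K := fun u v : ℕ × ℕ ↦ f (u.2 + v.1, u.1 + v.2)) hf s

theorem norm_sq_le_re_mul_re (hf : IsPosSemidefNatProd f) (m n : ℕ) :
    ‖f (m, n)‖ ^ 2 ≤ (f (0, 0)).re * (f (m + n, m + n)).re := by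
  simpa [Matrix.submatrix, add_comm n m] using
    (hf.posSemidef_submatrix ![(0, 0), (m, n)]).norm_sq_apply_le 0 1

theorem re_nonneg (hf : IsPosSemidefNatProd f) (p : ℕ) : 0 ≤ (f (p, p)).re := by
  have := (hf.posSemidef_submatrix ![(0, p)]).diag_nonneg (i := 0)
  simpa [Matrix.submatrix] using (Complex.nonneg_iff.mp this).1

end IsPosSemidefNatProd

section Growth

variable {a : ℕ → ℝ}

theorem pow_two_pow_le_of_sq_le (h0 : ∀ p, 0 ≤ a p) (hsq : ∀ p, a p ^ 2 ≤ a (2 * p))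
    (p j : ℕ) : a p ^ 2 ^ j ≤ a (2 ^ j * p) := by
  induction j with
  | zero => simp
  | succ j ih =>
    calc a p ^ 2 ^ (j + 1) = (a p ^ 2 ^ j) ^ 2 := by rw [pow_succ, pow_mul]
      _ ≤ a (2 ^ j * p) ^ 2 := pow_le_pow_left₀ (pow_nonneg (h0 p) _) ih 2
      _ ≤ a (2 * (2 ^ j * p)) := hsq _
      _ = a (2 ^ (j + 1) * p) := by rw [pow_succ, mul_comm _ 2, mul_assoc]

theorem le_pow_of_sq_le_of_le_mul_pow {C ρ : ℝ} (hρ : 0 < ρ) (h0 : ∀ p, 0 ≤ a p)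
    (hsq : ∀ p, a p ^ 2 ≤ a (2 * p)) (hbound : ∀ p, a p ≤ C * ρ ^ p) (p : ℕ) :
    a p ≤ ρ ^ p := by
  by_contra! hlt
  have hx : 1 < a p / ρ ^ p := (one_lt_div (pow_pos hρ p)).mpr hlt
  obtain ⟨j, hj⟩ := pow_unbounded_of_one_lt C hx
  have hle : (a p / ρ ^ p) ^ 2 ^ j ≤ C := by
    rw [div_pow, div_le_iff₀ (by positivity), ← pow_mul, mul_comm p]
    exact (pow_two_pow_le_of_sq_le h0 hsq p j).trans (hbound _)
  have hmono : (a p / ρ ^ p) ^ j ≤ (a p / ρ ^ p) ^ 2 ^ j :=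
    pow_le_pow_right₀ hx.le Nat.lt_two_pow_self.le
  linarith

theorem sSup_rpow_inv_le {b : ℝ} (h0 : ∀ k, 0 ≤ a k) (hb : 0 ≤ b)
    (h : ∀ k, a k ≤ b ^ (2 * k)) :
    sSup {x : ℝ | ∃ k : ℕ, 1 ≤ k ∧ x = a k ^ (((2 * k : ℕ) : ℝ))⁻¹} ≤ b := by
  refine csSup_le ⟨_, 1, le_rfl, rfl⟩ ?_
  rintro x ⟨k, hk, rfl⟩
  calc a k ^ (((2 * k : ℕ) : ℝ))⁻¹ ≤ (b ^ (2 * k)) ^ (((2 * k : ℕ) : ℝ))⁻¹ :=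
        Real.rpow_le_rpow (h0 k) (h k) (by positivity)
    _ = b := Real.pow_rpow_inv_natCast hb (by omega)

end Growth

theorem stmt_18
    (f : ℕ × ℕ → ℂ) (hnorm : f (0, 0) = 1)
    (hpsd : ∀ (n : ℕ) (s : Fin n → ℕ × ℕ) (c : Fin n → ℂ),
      ∃ r : ℝ, 0 ≤ r ∧
        (∑ j, ∑ k, c j * (starRingEnd ℂ) (c k) *
          f ((s j).2 + (s k).1, (s j).1 + (s k).2)) = (r : ℂ))
    (C r : ℝ) (hC : 0 < C) (hr : 0 < r)
    (hbound : ∀ n : ℕ, (f (n, n)).re ≤ C * r ^ (2 * n)) :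
    ∀ m n : ℕ,
      sSup {x : ℝ | ∃ k : ℕ, 1 ≤ k ∧
          x = (f (k * (m + n), k * (m + n))).re ^ (((2 * k : ℕ) : ℝ))⁻¹}
        ≤ r ^ (m + n) ∧
      ‖f (m, n)‖ ≤ Real.sqrt C * r ^ (m + n) := by
  have hf : IsPosSemidefNatProd f := by
    intro n s c
    obtain ⟨ρ, hρ, h⟩ := hpsd n s c
    exact h ▸ Complex.zero_le_real.mpr hρ
  have hre := hf.re_nonneg
  have hCS (m n : ℕ) : ‖f (m, n)‖ ^ 2 ≤ (f (m + n, m + n)).re := by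
    simpa [hnorm] using hf.norm_sq_le_re_mul_re m n
  have hsq (p : ℕ) : (f (p, p)).re ^ 2 ≤ (f (2 * p, 2 * p)).re :=
    calc (f (p, p)).re ^ 2 ≤ ‖f (p, p)‖ ^ 2 :=
          sq_le_sq.mpr ((Complex.abs_re_le_norm _).trans (le_abs_self _))
      _ ≤ (f (2 * p, 2 * p)).re := by simpa [two_mul] using hCS p p
  have hdiag : ∀ p, (f (p, p)).re ≤ (r ^ 2) ^ p :=
    le_pow_of_sq_le_of_le_mul_pow (by positivity) hre hsq fun p ↦ by simpa [pow_mul] using hbound p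
  intro m n
  refine ⟨sSup_rpow_inv_le (fun k ↦ hre _) (by positivity) fun k ↦ ?_, ?_⟩
  · calc _ ≤ (r ^ 2) ^ (k * (m + n)) := hdiag _
      _ = (r ^ (m + n)) ^ (2 * k) := by ring
  · calc ‖f (m, n)‖ = √(‖f (m, n)‖ ^ 2) := (Real.sqrt_sq (norm_nonneg _)).symm
      _ ≤ √(C * (r ^ (m + n)) ^ 2) := by
          gcongr
          simpa [← pow_mul, mul_comm] using (hCS m n).trans (hbound (m + n))
      _ = √C * r ^ (m + n) := by rw [Real.sqrt_mul hC.le, Real.sqrt_sq (by positivity)]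
end
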